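/- arXiv:1711.03801 — 11 statements merged into one kernel-verified Lean document; each statement's English description precedes it below -/
import Mathlib

section
/- Let T : H → K be a bounded linear bijection between real Hilbert spaces such that ‖T S T⁻¹‖ ≤ ‖S‖ for all invertible bounded linear operators S on H. Then ‖Tx‖ = ‖T‖·‖x‖ for all x ∈ H. -/
/-!
Two vectors `u`, `v` of the same norm are exchanged by the reflection in `(ℝ ∙ (u - v))ᗮ`, an
invertible isometry. Conjugating it by `T` gives an operator of norm at most `1` sending `T u` to
`T v`, so `‖T v‖ ≤ ‖T u‖`, and by symmetry `‖T u‖ = ‖T v‖`. Hence `‖T x‖ / ‖x‖` is constant on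
`x ≠ 0`, and this constant is `‖T‖`.
-/

section
variable {𝕜 E F : Type*} [NontriviallyNormedField 𝕜] [SeminormedAddCommGroup E]
  [NormedSpace 𝕜 E] [SeminormedAddCommGroup F] [NormedSpace 𝕜 F]

theorem ContinuousLinearEquiv.norm_apply_apply_le_norm_conj_mul (T : E ≃L[𝕜] F) (S : E →L[𝕜] E)
    (x : E) : ‖T (S x)‖ ≤ ‖(T : E →L[𝕜] F).comp (S.comp (T.symm : F →L[𝕜] E))‖ * ‖T x‖ := by
  simpa using ((T : E →L[𝕜] F).comp (S.comp (T.symm : F →L[𝕜] E))).le_opNorm (T x)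

theorem ContinuousLinearEquiv.norm_apply_isometry_le (T : E ≃L[𝕜] F)
    (h : ∀ S : E ≃L[𝕜] E,
      ‖(T : E →L[𝕜] F).comp ((S : E →L[𝕜] E).comp (T.symm : F →L[𝕜] E))‖ ≤ ‖(S : E →L[𝕜] E)‖)
    (S : E ≃ₗᵢ[𝕜] E) (x : E) : ‖T (S x)‖ ≤ ‖T x‖ :=
  (T.norm_apply_apply_le_norm_conj_mul (S.toContinuousLinearEquiv : E →L[𝕜] E) x).trans <|
    mul_le_of_le_one_left (norm_nonneg _) <|
      (h _).trans S.toLinearIsometry.norm_toContinuousLinearMap_le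

end

section
variable {E F : Type*} [SeminormedAddCommGroup E] [NormedSpace ℝ E] [SeminormedAddCommGroup F]
  [NormedSpace ℝ F]

theorem ContinuousLinearMap.norm_apply_eq_opNorm_mul (f : E →L[ℝ] F)
    (hf : ∀ x z : E, ‖x‖ = ‖z‖ → ‖f x‖ = ‖f z‖) (x : E) : ‖f x‖ = ‖f‖ * ‖x‖ := by
  refine le_antisymm (f.le_opNorm x) ?_
  rcases (norm_nonneg x).eq_or_lt with hx | hx
  · rw [← hx, mul_zero]; exact norm_nonneg _
  have hscale (z : E) : ‖x‖ * ‖f z‖ = ‖z‖ * ‖f x‖ := by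
    simpa [norm_smul, mul_comm] using hf (‖x‖ • z) (‖z‖ • x) (by simp [norm_smul, mul_comm])
  rw [← le_div_iff₀ hx]
  refine f.opNorm_le_bound (by positivity) fun z => ?_
  rw [div_mul_eq_mul_div, le_div_iff₀ hx, mul_comm, hscale, mul_comm]

end

theorem ContinuousLinearEquiv.norm_apply_eq_of_norm_eq {H K : Type*} [NormedAddCommGroup H]
    [InnerProductSpace ℝ H] [NormedAddCommGroup K] [InnerProductSpace ℝ K] (T : H ≃L[ℝ] K)
    (h : ∀ S : H ≃L[ℝ] H,
      ‖(T : H →L[ℝ] K).comp ((S : H →L[ℝ] H).comp (T.symm : K →L[ℝ] H))‖ ≤ ‖(S : H →L[ℝ] H)‖)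
    {u v : H} (huv : ‖u‖ = ‖v‖) : ‖T u‖ = ‖T v‖ := by
  apply le_antisymm
  · simpa [Submodule.reflection_sub huv.symm] using
      T.norm_apply_isometry_le h (Submodule.reflection (ℝ ∙ (v - u))ᗮ) v
  · simpa [Submodule.reflection_sub huv] using
      T.norm_apply_isometry_le h (Submodule.reflection (ℝ ∙ (u - v))ᗮ) u

theorem stmt_4_general {H K : Type*} [NormedAddCommGroup H] [InnerProductSpace ℝ H]
    [NormedAddCommGroup K] [InnerProductSpace ℝ K]
    (T : H ≃L[ℝ] K)
    (h : ∀ S : H ≃L[ℝ] H,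
      ‖(T : H →L[ℝ] K).comp ((S : H →L[ℝ] H).comp (T.symm : K →L[ℝ] H))‖ ≤ ‖(S : H →L[ℝ] H)‖) :
    ∀ x : H, ‖T x‖ = ‖(T : H →L[ℝ] K)‖ * ‖x‖ :=
  (T : H →L[ℝ] K).norm_apply_eq_opNorm_mul fun _ _ => T.norm_apply_eq_of_norm_eq h

theorem stmt_4 {H K : Type*} [NormedAddCommGroup H] [InnerProductSpace ℝ H] [CompleteSpace H]
    [NormedAddCommGroup K] [InnerProductSpace ℝ K] [CompleteSpace K]
    (T : H ≃L[ℝ] K)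
    (h : ∀ S : H ≃L[ℝ] H,
      ‖(T : H →L[ℝ] K).comp ((S : H →L[ℝ] H).comp (T.symm : K →L[ℝ] H))‖ ≤ ‖(S : H →L[ℝ] H)‖) :
    ∀ x : H, ‖T x‖ = ‖(T : H →L[ℝ] K)‖ * ‖x‖ :=
  stmt_4_general T h
end

section
/- Let T ∈ B(H) be a bounded linear bijection on a real Hilbert space H such that ‖T(x⊗y)T⁻¹‖ ≤ ‖x⊗y‖ for all x, y ∈ H, where x⊗y is the rank-one operator z ↦ ⟨z,y⟩x. Then ‖T‖·‖T⁻¹‖ ≤ 1. -/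
open scoped RealInnerProductSpace

set_option synthInstance.maxHeartbeats 1000000
set_option maxHeartbeats 1000000

theorem stmt_5 {H : Type*} [NormedAddCommGroup H] [InnerProductSpace ℝ H] [CompleteSpace H]
    (T : H ≃L[ℝ] H)
    (h : ∀ x y : H,
      ‖(T : H →L[ℝ] H).comp (((innerSL ℝ y).smulRight x).comp (T.symm : H →L[ℝ] H))‖ ≤
        ‖(innerSL ℝ y).smulRight x‖) :
    ‖(T : H →L[ℝ] H)‖ * ‖(T.symm : H →L[ℝ] H)‖ ≤ 1 := by
  set A := ContinuousLinearMap.adjoint (T.symm : H →L[ℝ] H) with hA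
  have key : ∀ x y : H, ‖A y‖ * ‖(T : H →L[ℝ] H) x‖ ≤ ‖y‖ * ‖x‖ := by
    intro x y
    have heq : (T : H →L[ℝ] H).comp (((innerSL ℝ y).smulRight x).comp (T.symm : H →L[ℝ] H)) =
        (innerSL ℝ (A y)).smulRight ((T : H →L[ℝ] H) x) := by
      ext z
      simp only [ContinuousLinearMap.comp_apply, ContinuousLinearMap.smulRight_apply,
        innerSL_apply_apply, hA]
      rw [ContinuousLinearMap.adjoint_inner_left, real_inner_comm, map_smul]
    have := h x y
    rw [heq] at this
    rw [ContinuousLinearMap.norm_smulRight_apply, ContinuousLinearMap.norm_smulRight_apply,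
      innerSL_apply_norm, innerSL_apply_norm] at this
    exact this
  have step1 : ∀ y : H, ‖A y‖ * ‖(T : H →L[ℝ] H)‖ ≤ ‖y‖ := by
    intro y
    have : ‖‖A y‖ • (T : H →L[ℝ] H)‖ ≤ ‖y‖ := by
      apply ContinuousLinearMap.opNorm_le_bound _ (norm_nonneg y)
      intro x
      simpa [norm_smul, mul_assoc, abs_of_nonneg (norm_nonneg (A y))] using key x y
    have hns : ‖(‖A y‖) • (T : H →L[ℝ] H)‖ = ‖A y‖ * ‖(T : H →L[ℝ] H)‖ := by
      rw [norm_smul (‖A y‖) (T : H →L[ℝ] H), Real.norm_eq_abs, abs_of_nonneg (norm_nonneg _)]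
    rwa [hns] at this
  have step2 : ‖(T : H →L[ℝ] H)‖ * ‖A‖ ≤ 1 := by
    have : ‖‖(T : H →L[ℝ] H)‖ • A‖ ≤ 1 := by
      apply ContinuousLinearMap.opNorm_le_bound _ zero_le_one
      intro y
      rw [ContinuousLinearMap.smul_apply, norm_smul, Real.norm_eq_abs,
        abs_of_nonneg (norm_nonneg _), one_mul]
      calc ‖(T : H →L[ℝ] H)‖ * ‖A y‖ = ‖A y‖ * ‖(T : H →L[ℝ] H)‖ := mul_comm _ _
        _ ≤ ‖y‖ := step1 y
    have hns : ‖(‖(T : H →L[ℝ] H)‖) • A‖ = ‖(T : H →L[ℝ] H)‖ * ‖A‖ := by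
      rw [norm_smul (‖(T : H →L[ℝ] H)‖) A, Real.norm_eq_abs, abs_of_nonneg (norm_nonneg _)]
    rwa [hns] at this
  have hadj : ‖A‖ = ‖(T.symm : H →L[ℝ] H)‖ :=
    LinearIsometryEquiv.norm_map ContinuousLinearMap.adjoint _
  rwa [hadj] at step2
end

section
/- Let T : H → K be an injective bounded linear map between real Hilbert spaces, and let x, y be linearly independent unit vectors in H. Then there exist unit vectors x₁, x₂ ∈ H such that x₁ ⊥ x₂, Tx₁ ⊥ Tx₂, ‖Tx₁‖ ≤ ‖Tx‖ ≤ ‖Tx₂‖, and ‖Tx₁‖ ≤ ‖Ty‖ ≤ ‖Tx₂‖. -/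
open scoped RealInnerProductSpace

lemma norm_comb_aux {H K : Type*} [NormedAddCommGroup H] [InnerProductSpace ℝ H]
    [NormedAddCommGroup K] [InnerProductSpace ℝ K]
    (T : H →L[ℝ] K) (a b : H) (c s : ℝ) (h : ⟪T a, T b⟫ = 0) :
    ‖T (c • a + s • b)‖ ^ 2 = c ^ 2 * ‖T a‖ ^ 2 + s ^ 2 * ‖T b‖ ^ 2 := by
  have hT : T (c • a + s • b) = c • T a + s • T b := by simp
  rw [hT, norm_add_sq_real, norm_smul, norm_smul, real_inner_smul_left, real_inner_smul_right,
    h]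
  simp [norm_smul, mul_pow, sq_abs]

lemma unit_comb_aux {H : Type*} [NormedAddCommGroup H] [InnerProductSpace ℝ H]
    (e₁ e₂ : H) (he₁ : ‖e₁‖ = 1) (he₂ : ‖e₂‖ = 1) (h : ⟪e₁, e₂⟫ = 0)
    (c s : ℝ) (hcs : c ^ 2 + s ^ 2 = 1) : ‖c • e₁ + s • e₂‖ = 1 := by
  have h2 : ‖c • e₁ + s • e₂‖ ^ 2 = 1 := by
    rw [norm_add_sq_real, norm_smul, norm_smul, real_inner_smul_left, real_inner_smul_right, h,
      he₁, he₂]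
    simp [mul_pow, sq_abs]
    linarith
  nlinarith [norm_nonneg (c • e₁ + s • e₂)]

lemma bounds_aux {H K : Type*} [NormedAddCommGroup H] [InnerProductSpace ℝ H]
    [NormedAddCommGroup K] [InnerProductSpace ℝ K]
    (T : H →L[ℝ] K) (a b : H) (c s : ℝ) (hab : ⟪T a, T b⟫ = 0)
    (hT : ‖T a‖ ≤ ‖T b‖) (hcs : c ^ 2 + s ^ 2 = 1) :
    ‖T a‖ ≤ ‖T (c • a + s • b)‖ ∧ ‖T (c • a + s • b)‖ ≤ ‖T b‖ := by
  have h := norm_comb_aux T a b c s hab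
  have hBA : ‖T a‖ ^ 2 ≤ ‖T b‖ ^ 2 := by nlinarith [norm_nonneg (T a), norm_nonneg (T b)]
  have hA2 : ‖T a‖ ^ 2 ≤ ‖T (c • a + s • b)‖ ^ 2 := by
    nlinarith [mul_nonneg (sq_nonneg s) (sub_nonneg.mpr hBA)]
  have hB2 : ‖T (c • a + s • b)‖ ^ 2 ≤ ‖T b‖ ^ 2 := by
    nlinarith [mul_nonneg (sq_nonneg c) (sub_nonneg.mpr hBA)]
  constructor
  · calc ‖T a‖ = Real.sqrt (‖T a‖ ^ 2) := (Real.sqrt_sq (norm_nonneg _)).symm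
      _ ≤ Real.sqrt (‖T (c • a + s • b)‖ ^ 2) := Real.sqrt_le_sqrt hA2
      _ = _ := Real.sqrt_sq (norm_nonneg _)
  · calc ‖T (c • a + s • b)‖ = Real.sqrt (‖T (c • a + s • b)‖ ^ 2) := (Real.sqrt_sq (norm_nonneg _)).symm
      _ ≤ Real.sqrt (‖T b‖ ^ 2) := Real.sqrt_le_sqrt hB2
      _ = _ := Real.sqrt_sq (norm_nonneg _)

set_option maxHeartbeats 1600000 in
theorem stmt_6 {H K : Type*} [NormedAddCommGroup H] [InnerProductSpace ℝ H] [CompleteSpace H]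
    [NormedAddCommGroup K] [InnerProductSpace ℝ K] [CompleteSpace K]
    (T : H →L[ℝ] K) (hinj : Function.Injective T)
    (x y : H) (hx : ‖x‖ = 1) (hy : ‖y‖ = 1) (hind : LinearIndependent ℝ ![x, y]) :
    ∃ x₁ x₂ : H, ‖x₁‖ = 1 ∧ ‖x₂‖ = 1 ∧ ⟪x₁, x₂⟫ = 0 ∧ ⟪T x₁, T x₂⟫ = 0 ∧
      ‖T x₁‖ ≤ ‖T x‖ ∧ ‖T x‖ ≤ ‖T x₂‖ ∧ ‖T x₁‖ ≤ ‖T y‖ ∧ ‖T y‖ ≤ ‖T x₂‖ := by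
  classical
  set p : ℝ := ⟪x, y⟫ with hp
  set w : H := y - p • x with hw
  have hxw : ⟪x, w⟫ = 0 := by
    simp [hw, inner_sub_right, real_inner_smul_right, real_inner_self_eq_norm_sq, hx, hp]
  have hwne : w ≠ 0 := by
    intro h0
    have hyp : y = p • x := by
      have h1 := sub_eq_zero.mp h0
      exact h1
    obtain ⟨-, hax⟩ := linearIndependent_fin2.mp hind
    have hp0 : p ≠ 0 := by
      intro hpz
      rw [hpz, zero_smul] at hyp
      rw [hyp] at hy
      simp at hy
    refine hax p⁻¹ ?_
    simp only [Matrix.cons_val_one, Matrix.head_cons, Matrix.cons_val_zero]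
    rw [hyp, smul_smul, inv_mul_cancel₀ hp0, one_smul]
  set r : ℝ := ‖w‖ with hr
  have hrpos : 0 < r := norm_pos_iff.mpr hwne
  set e₂ : H := r⁻¹ • w with he2def
  have he₂ : ‖e₂‖ = 1 := by
    rw [he2def, norm_smul, Real.norm_eq_abs, abs_inv, abs_of_pos hrpos]
    rw [show ‖w‖ = r from rfl]
    exact inv_mul_cancel₀ hrpos.ne'
  have hxe₂ : ⟪x, e₂⟫ = 0 := by
    rw [he2def, real_inner_smul_right, hxw, mul_zero]
  have hpr : p ^ 2 + r ^ 2 = 1 := by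
    have hy2 : ‖y‖ ^ 2 = 1 := by rw [hy]; norm_num
    have hysum : y = p • x + w := by rw [hw]; abel
    have := norm_add_sq_real (p • x) w
    rw [← hysum, norm_smul, real_inner_smul_left, hxw, hx] at this
    simp [mul_pow, sq_abs] at this
    nlinarith
  have hye : y = p • x + r • e₂ := by
    rw [he2def, smul_smul, mul_inv_cancel₀ (ne_of_gt hrpos), one_smul, hw]; abel
  -- rotation function
  set g : ℝ → ℝ := fun θ =>
    ⟪T (Real.cos θ • x + Real.sin θ • e₂), T (-Real.sin θ • x + Real.cos θ • e₂)⟫ with hg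
  have hgcont : Continuous g := by
    apply Continuous.inner <;> fun_prop
  have hg0 : g 0 = ⟪T x, T e₂⟫ := by simp [hg]
  have hgpi : g (Real.pi / 2) = -⟪T x, T e₂⟫ := by
    simp [hg, real_inner_comm]
  have hex : ∃ θ ∈ Set.Icc 0 (Real.pi / 2), g θ = 0 := by
    have hpi : (0 : ℝ) ≤ Real.pi / 2 := by positivity
    rcases le_total 0 (g 0) with h0 | h0
    · have hm : (0 : ℝ) ∈ Set.Icc (g (Real.pi / 2)) (g 0) := by
        rw [hg0] at h0
        rw [Set.mem_Icc, hgpi, hg0]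
        constructor <;> linarith
      obtain ⟨θ, hθ, hθ0⟩ := intermediate_value_Icc' hpi hgcont.continuousOn hm
      exact ⟨θ, hθ, hθ0⟩
    · have hm : (0 : ℝ) ∈ Set.Icc (g 0) (g (Real.pi / 2)) := by
        rw [hg0] at h0
        rw [Set.mem_Icc, hgpi, hg0]
        constructor <;> linarith
      obtain ⟨θ, hθ, hθ0⟩ := intermediate_value_Icc hpi hgcont.continuousOn hm
      exact ⟨θ, hθ, hθ0⟩
  obtain ⟨θ, _, hθ0⟩ := hex
  set c : ℝ := Real.cos θ with hc
  set s : ℝ := Real.sin θ with hs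
  have hcs : c ^ 2 + s ^ 2 = 1 := by rw [hc, hs]; exact Real.cos_sq_add_sin_sq θ
  set a : H := c • x + s • e₂ with ha
  set b : H := -s • x + c • e₂ with hb
  have hTab : ⟪T a, T b⟫ = 0 := hθ0
  have hna : ‖a‖ = 1 := unit_comb_aux x e₂ hx he₂ hxe₂ c s hcs
  have hnb : ‖b‖ = 1 := by
    apply unit_comb_aux x e₂ hx he₂ hxe₂ (-s) c
    nlinarith
  have he₂x : ⟪e₂, x⟫ = 0 := by rw [real_inner_comm]; exact hxe₂
  have hab : ⟪a, b⟫ = 0 := by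
    rw [ha, hb]
    simp only [inner_add_left, inner_add_right, real_inner_smul_left, real_inner_smul_right,
      hxe₂, he₂x, real_inner_self_eq_norm_sq, hx, he₂]
    ring
  -- representations
  have hxab : x = c • a + (-s) • b := by
    have h1 : c • a + (-s) • b = (c ^ 2 + s ^ 2) • x := by rw [ha, hb]; module
    rw [h1, hcs, one_smul]
  have hyab : y = (p * c + r * s) • a + (r * c - p * s) • b := by
    have h1 : (p * c + r * s) • a + (r * c - p * s) • b
        = (p * (c ^ 2 + s ^ 2)) • x + (r * (c ^ 2 + s ^ 2)) • e₂ := by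
      rw [ha, hb]; module
    rw [h1, hcs, mul_one, mul_one, hye]
  have hxcoef : c ^ 2 + (-s) ^ 2 = 1 := by nlinarith
  have hycoef : (p * c + r * s) ^ 2 + (r * c - p * s) ^ 2 = 1 := by nlinarith
  rcases le_total ‖T a‖ ‖T b‖ with hord | hord
  · refine ⟨a, b, hna, hnb, hab, hTab, ?_, ?_, ?_, ?_⟩
    · have := (bounds_aux T a b c (-s) hTab hord hxcoef).1
      rwa [← hxab] at this
    · have := (bounds_aux T a b c (-s) hTab hord hxcoef).2
      rwa [← hxab] at this
    · have := (bounds_aux T a b _ _ hTab hord hycoef).1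
      rwa [← hyab] at this
    · have := (bounds_aux T a b _ _ hTab hord hycoef).2
      rwa [← hyab] at this
  · have hTba : ⟪T b, T a⟫ = 0 := by rw [real_inner_comm]; exact hTab
    have hba : ⟪b, a⟫ = 0 := by rw [real_inner_comm]; exact hab
    have hxba : x = (-s) • b + c • a := by rw [hxab]; abel
    have hyba : y = (r * c - p * s) • b + (p * c + r * s) • a := by rw [hyab]; abel
    have hxcoef' : (-s) ^ 2 + c ^ 2 = 1 := by nlinarith
    have hycoef' : (r * c - p * s) ^ 2 + (p * c + r * s) ^ 2 = 1 := by nlinarith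
    refine ⟨b, a, hnb, hna, hba, hTba, ?_, ?_, ?_, ?_⟩
    · have := (bounds_aux T b a (-s) c hTba hord hxcoef').1
      rwa [← hxba] at this
    · have := (bounds_aux T b a (-s) c hTba hord hxcoef').2
      rwa [← hxba] at this
    · have := (bounds_aux T b a _ _ hTba hord hycoef').1
      rwa [← hyba] at this
    · have := (bounds_aux T b a _ _ hTba hord hycoef').2
      rwa [← hyba] at this
end

section
/- Let c ∈ [0,1), ε₀ ∈ [0, 1+c), and let T : H → K be an injective bounded linear map between real Hilbert spaces that is (ε₀, c)-angle preserving. Then √((1-c)(1+c−ε₀)/((1+c)(1−c+ε₀)))·‖T‖ ≤ [T]. -/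
open scoped RealInnerProductSpace

/-- The minimum modulus `[T]` of a bounded linear map: the infimum of `‖T x‖`
over unit vectors `x`. -/
noncomputable def minMod {H K : Type*} [NormedAddCommGroup H] [InnerProductSpace ℝ H]
    [NormedAddCommGroup K] [InnerProductSpace ℝ K] (T : H →L[ℝ] K) : ℝ :=
  ⨅ x : {x : H // ‖x‖ = 1}, ‖T x‖

/-- `T` is `(ε, c)`-angle preserving. -/
def AnglePres {H K : Type*} [NormedAddCommGroup H] [InnerProductSpace ℝ H]
    [NormedAddCommGroup K] [InnerProductSpace ℝ K] (c ε : ℝ) (T : H →L[ℝ] K) : Prop :=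
  ∀ x y : H, ⟪x, y⟫ = c * ‖x‖ * ‖y‖ →
    |⟪T x, T y⟫ - c * ‖T x‖ * ‖T y‖| ≤ ε * ‖T x‖ * ‖T y‖

/-- `ε̂(T, c)`: the smallest `ε` for which `T` is `(ε, c)`-angle preserving. -/
noncomputable def epsHat {H K : Type*} [NormedAddCommGroup H] [InnerProductSpace ℝ H]
    [NormedAddCommGroup K] [InnerProductSpace ℝ K] (c : ℝ) (T : H →L[ℝ] K) : ℝ :=
  sInf {ε : ℝ | ε ∈ Set.Icc 0 (1 + |c|) ∧ AnglePres c ε T}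

section AuxProofs

variable {H K : Type*} [NormedAddCommGroup H] [InnerProductSpace ℝ H]
  [NormedAddCommGroup K] [InnerProductSpace ℝ K]

lemma key_lemma (c ε : ℝ) (hc0 : 0 ≤ c) (hc1 : c < 1) (hε0 : 0 ≤ ε)
    (T : H →L[ℝ] K) (hpres : AnglePres c ε T)
    (x y : H) (hx : ‖x‖ = 1) (hy : ‖y‖ = 1) (hxy : ⟪x, y⟫ = 0) (hW : ⟪T x, T y⟫ = 0) :
    (1 - c) * (1 + c - ε) / ((1 + c) * (1 - c + ε)) * ‖T y‖ ^ 2 ≤ ‖T x‖ ^ 2 := by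
  have hc1' : (0:ℝ) < 1 + c := by linarith
  obtain ⟨r, hrdef⟩ : ∃ r : ℝ, r = (1 - c) / (1 + c) := ⟨_, rfl⟩
  have hr0 : 0 ≤ r := by rw [hrdef]; exact div_nonneg (by linarith) (by linarith)
  obtain ⟨s, hsdef⟩ : ∃ s : ℝ, s = Real.sqrt r := ⟨_, rfl⟩
  have hs2 : s ^ 2 = r := by rw [hsdef]; exact Real.sq_sqrt hr0
  have hyx : ⟪y, x⟫ = 0 := by rw [real_inner_comm]; exact hxy
  have hWyx : ⟪T y, T x⟫ = 0 := by rw [real_inner_comm]; exact hW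
  obtain ⟨u, hu⟩ : ∃ u : H, u = x + s • y := ⟨_, rfl⟩
  obtain ⟨v, hv⟩ : ∃ v : H, v = x - s • y := ⟨_, rfl⟩
  have hu2 : ‖u‖ ^ 2 = 1 + r := by
    rw [hu, @norm_add_sq_real, real_inner_smul_right, hxy, norm_smul, hx, hy]
    simp [Real.norm_eq_abs, mul_pow, sq_abs, hs2]
  have hv2 : ‖v‖ ^ 2 = 1 + r := by
    rw [hv, @norm_sub_sq_real, real_inner_smul_right, hxy, norm_smul, hx, hy]
    simp [Real.norm_eq_abs, mul_pow, sq_abs, hs2]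
  have hss : ⟪s • y, s • y⟫ = r := by
    rw [real_inner_smul_left, real_inner_smul_right, real_inner_self_eq_norm_sq, hy]
    linear_combination hs2
  have huv : ⟪u, v⟫ = 1 - r := by
    rw [hu, hv, inner_sub_right, inner_add_left, inner_add_left, real_inner_smul_left,
      real_inner_smul_right, hxy, hyx, hss, real_inner_self_eq_norm_sq, hx]
    ring
  have hnu : ‖u‖ = Real.sqrt (1 + r) := by
    rw [← Real.sqrt_sq (norm_nonneg u), hu2]
  have hnv : ‖v‖ = Real.sqrt (1 + r) := by
    rw [← Real.sqrt_sq (norm_nonneg v), hv2]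
  have hnuv : ‖u‖ * ‖v‖ = 1 + r := by
    rw [hnu, hnv, Real.mul_self_sqrt (by linarith)]
  have hangle : ⟪u, v⟫ = c * ‖u‖ * ‖v‖ := by
    rw [huv, mul_assoc, hnuv, hrdef]
    field_simp
    ring
  have happ := hpres u v hangle
  have hTu : T u = T x + s • T y := by rw [hu]; simp
  have hTv : T v = T x - s • T y := by rw [hv]; simp
  obtain ⟨A, hA⟩ : ∃ A : ℝ, A = ‖T x‖ ^ 2 := ⟨_, rfl⟩
  obtain ⟨B, hB⟩ : ∃ B : ℝ, B = ‖T y‖ ^ 2 := ⟨_, rfl⟩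
  rw [← hA, ← hB]
  have hA0 : 0 ≤ A := hA ▸ sq_nonneg _
  have hB0 : 0 ≤ B := hB ▸ sq_nonneg _
  have hTu2 : ‖T u‖ ^ 2 = A + r * B := by
    rw [hTu, @norm_add_sq_real, real_inner_smul_right, hW, norm_smul]
    simp [Real.norm_eq_abs, mul_pow, sq_abs, hs2, ← hA, ← hB]
  have hTv2 : ‖T v‖ ^ 2 = A + r * B := by
    rw [hTv, @norm_sub_sq_real, real_inner_smul_right, hW, norm_smul]
    simp [Real.norm_eq_abs, mul_pow, sq_abs, hs2, ← hA, ← hB]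
  have hAB0 : 0 ≤ A + r * B := by positivity
  have hnTuv : ‖T u‖ * ‖T v‖ = A + r * B := by
    rw [← Real.sqrt_sq (norm_nonneg (T u)), ← Real.sqrt_sq (norm_nonneg (T v)), hTu2, hTv2,
      Real.mul_self_sqrt hAB0]
  have hss2 : ⟪s • T y, s • T y⟫ = r * B := by
    rw [real_inner_smul_left, real_inner_smul_right, real_inner_self_eq_norm_sq, ← hB]
    linear_combination B * hs2
  have hTuv : ⟪T u, T v⟫ = A - r * B := by
    rw [hTu, hTv, inner_sub_right, inner_add_left, inner_add_left, real_inner_smul_left,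
      real_inner_smul_right, hW, hWyx, hss2, real_inner_self_eq_norm_sq, ← hA]
    ring
  rw [hTuv] at happ
  rw [mul_assoc, mul_assoc, hnTuv] at happ
  have habs := (abs_le.mp happ).1
  have hd : (0:ℝ) < (1 + c) * (1 - c + ε) := by nlinarith
  have hr1 : r * (1 + c) = 1 - c := by rw [hrdef]; field_simp
  have key : r * B * (1 + c - ε) ≤ A * (1 - c + ε) := by linarith [habs]
  have key2 := mul_le_mul_of_nonneg_left key (le_of_lt hc1')
  rw [div_mul_eq_mul_div, div_le_iff₀ hd]
  calc (1 - c) * (1 + c - ε) * B = (1 + c) * (r * B * (1 + c - ε)) := by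
        linear_combination (-((1 + c - ε) * B)) * hr1
    _ ≤ (1 + c) * (A * (1 - c + ε)) := key2
    _ = A * ((1 + c) * (1 - c + ε)) := by ring

lemma combine_num (g A' B' a b p q : ℝ) (hg0' : 0 ≤ g) (hA'0 : 0 ≤ A') (hB'0 : 0 ≤ B')
    (hab : a ^ 2 + b ^ 2 = 1) (hpq : p ^ 2 + q ^ 2 = 1)
    (h1 : g * B' ≤ A') (h2 : g * A' ≤ B') :
    g * (p ^ 2 * A' + q ^ 2 * B') ≤ a ^ 2 * A' + b ^ 2 * B' := by
  rcases le_total A' B' with hAB | hAB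
  · have P1 : 0 ≤ g * p ^ 2 * (B' - A') :=
      mul_nonneg (mul_nonneg hg0' (sq_nonneg p)) (sub_nonneg.mpr hAB)
    have P2 : 0 ≤ b ^ 2 * (B' - A') := mul_nonneg (sq_nonneg b) (sub_nonneg.mpr hAB)
    have E1 : a ^ 2 * A' + b ^ 2 * A' = A' := by linear_combination A' * hab
    have E2 : g * (p ^ 2 * B') + g * (q ^ 2 * B') = g * B' := by
      linear_combination (g * B') * hpq
    nlinarith [P1, P2, E1, E2, h1]
  · have P1 : 0 ≤ g * q ^ 2 * (A' - B') :=
      mul_nonneg (mul_nonneg hg0' (sq_nonneg q)) (sub_nonneg.mpr hAB)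
    have P2 : 0 ≤ a ^ 2 * (A' - B') := mul_nonneg (sq_nonneg a) (sub_nonneg.mpr hAB)
    have E1 : a ^ 2 * B' + b ^ 2 * B' = B' := by linear_combination B' * hab
    have E2 : g * (p ^ 2 * A') + g * (q ^ 2 * A') = g * A' := by
      linear_combination (g * A') * hpq
    nlinarith [P1, P2, E1, E2, h2]

set_option maxHeartbeats 1600000 in
lemma pair_bound (c ε : ℝ) (hc0 : 0 ≤ c) (hc1 : c < 1) (hε0 : 0 ≤ ε) (hε1 : ε ≤ 1 + c)
    (T : H →L[ℝ] K) (hpres : AnglePres c ε T)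
    (x y : H) (hx : ‖x‖ = 1) (hy : ‖y‖ = 1) :
    (1 - c) * (1 + c - ε) / ((1 + c) * (1 - c + ε)) * ‖T y‖ ^ 2 ≤ ‖T x‖ ^ 2 := by
  have hc1' : (0:ℝ) < 1 + c := by linarith
  have hd : (0:ℝ) < (1 + c) * (1 - c + ε) := by nlinarith
  have hg0 : 0 ≤ (1 - c) * (1 + c - ε) / ((1 + c) * (1 - c + ε)) ∨ True := Or.inr trivial
  obtain ⟨g, hgdef⟩ : ∃ g : ℝ, g = (1 - c) * (1 + c - ε) / ((1 + c) * (1 - c + ε)) := ⟨_, rfl⟩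
  rw [← hgdef]
  have hg1 : g ≤ 1 := by
    rw [hgdef, div_le_one hd]; nlinarith
  have hgnn : 0 ≤ g ∨ g ≤ 0 := le_total 0 g
  obtain ⟨t, htdef⟩ : ∃ t : ℝ, t = ⟪y, x⟫ := ⟨_, rfl⟩
  by_cases hz : y - t • x = 0
  · -- y = t • x with |t| = 1
    have hyx : y = t • x := by rwa [sub_eq_zero] at hz
    have ht1 : |t| = 1 := by
      have : ‖y‖ = |t| * ‖x‖ := by rw [hyx, norm_smul, Real.norm_eq_abs]
      rw [hx, hy] at this; linarith
    have hTy : ‖T y‖ = ‖T x‖ := by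
      rw [hyx, map_smul, norm_smul, Real.norm_eq_abs, ht1, one_mul]
    rw [hTy]
    nlinarith [sq_nonneg ‖T x‖, sq_nonneg (1 - g), hg1, sq_nonneg ‖T x‖]
  · -- main case: x, y linearly independent
    obtain ⟨m, hmdef⟩ : ∃ m : ℝ, m = ‖y - t • x‖ := ⟨_, rfl⟩
    have hm0 : 0 < m := by rw [hmdef]; exact norm_pos_iff.mpr hz
    obtain ⟨e, hedef⟩ : ∃ e : H, e = m⁻¹ • (y - t • x) := ⟨_, rfl⟩
    have he : ‖e‖ = 1 := by
      rw [hedef, norm_smul, Real.norm_eq_abs, abs_of_pos (inv_pos.mpr hm0), ← hmdef,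
        inv_mul_cancel₀ hm0.ne']
    have hzx : ⟪x, y - t • x⟫ = 0 := by
      rw [inner_sub_right, real_inner_smul_right, real_inner_self_eq_norm_sq, hx, htdef,
        real_inner_comm]
      ring
    have hxe : ⟪x, e⟫ = 0 := by
      rw [hedef, real_inner_smul_right, hzx, mul_zero]
    have hex : ⟪e, x⟫ = 0 := by rw [real_inner_comm]; exact hxe
    have hym : y = t • x + m • e := by
      rw [hedef, smul_smul, mul_inv_cancel₀ hm0.ne', one_smul]
      abel
    have htm : t ^ 2 + m ^ 2 = 1 := by
      have h1 : ‖y‖ ^ 2 = t ^ 2 + 2 * (t * (m * ⟪x, e⟫)) + m ^ 2 := by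
        rw [hym, @norm_add_sq_real, norm_smul, norm_smul, real_inner_smul_left,
          real_inner_smul_right, Real.norm_eq_abs, Real.norm_eq_abs, hx, he]
        simp [mul_pow, sq_abs]
      rw [hy, hxe] at h1
      nlinarith [h1]
    obtain ⟨f, hfdef⟩ : ∃ f : ℝ → ℝ, f = fun φ : ℝ =>
        ⟪T (Real.cos φ • x + Real.sin φ • e), T (-Real.sin φ • x + Real.cos φ • e)⟫ := ⟨_, rfl⟩
    have hcont : Continuous f := by
      rw [hfdef]
      exact Continuous.inner
        (T.continuous.comp ((Real.continuous_cos.smul continuous_const).add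
          (Real.continuous_sin.smul continuous_const)))
        (T.continuous.comp ((Real.continuous_sin.neg.smul continuous_const).add
          (Real.continuous_cos.smul continuous_const)))
    have hf0 : f 0 = ⟪T x, T e⟫ := by rw [hfdef]; simp
    have hfpi : f (Real.pi / 2) = -⟪T x, T e⟫ := by
      rw [hfdef]
      simp [real_inner_comm]
    have hpi2 : (0:ℝ) ≤ Real.pi / 2 := by positivity
    have hzero : ∃ φ, f φ = 0 := by
      rcases le_total 0 (f 0) with h | h
      · have hmem : (0:ℝ) ∈ Set.Icc (f (Real.pi / 2)) (f 0) := by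
          constructor
          · rw [hfpi, ← hf0]; linarith
          · exact h
        obtain ⟨φ, _, hφ⟩ := intermediate_value_Icc' hpi2 hcont.continuousOn hmem
        exact ⟨φ, hφ⟩
      · have hmem : (0:ℝ) ∈ Set.Icc (f 0) (f (Real.pi / 2)) := by
          constructor
          · exact h
          · rw [hfpi, ← hf0]; linarith
        obtain ⟨φ, _, hφ⟩ := intermediate_value_Icc hpi2 hcont.continuousOn hmem
        exact ⟨φ, hφ⟩
    obtain ⟨φ, hφ⟩ := hzero
    rw [hfdef] at hφ
    simp only at hφ
    obtain ⟨x', hx'def⟩ : ∃ x' : H, x' = Real.cos φ • x + Real.sin φ • e := ⟨_, rfl⟩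
    obtain ⟨y', hy'def⟩ : ∃ y' : H, y' = -Real.sin φ • x + Real.cos φ • e := ⟨_, rfl⟩
    have hW' : ⟪T x', T y'⟫ = 0 := by rw [hx'def, hy'def]; exact hφ
    have hsc : Real.sin φ ^ 2 + Real.cos φ ^ 2 = 1 := Real.sin_sq_add_cos_sq φ
    have hx'1 : ‖x'‖ = 1 := by
      have h1 : ‖x'‖ ^ 2 = 1 := by
        rw [hx'def, @norm_add_sq_real, norm_smul, norm_smul, real_inner_smul_left,
          real_inner_smul_right, hxe, Real.norm_eq_abs, Real.norm_eq_abs, hx, he]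
        simp [mul_pow, sq_abs]
      rw [← Real.sqrt_sq (norm_nonneg x'), h1, Real.sqrt_one]
    have hy'1 : ‖y'‖ = 1 := by
      have h1 : ‖y'‖ ^ 2 = 1 := by
        rw [hy'def, @norm_add_sq_real, norm_smul, norm_smul, real_inner_smul_left,
          real_inner_smul_right, hxe, Real.norm_eq_abs, Real.norm_eq_abs, hx, he]
        simp [mul_pow, sq_abs]
      rw [← Real.sqrt_sq (norm_nonneg y'), h1, Real.sqrt_one]
    have hx'y' : ⟪x', y'⟫ = 0 := by
      rw [hx'def, hy'def, inner_add_left, inner_add_right, inner_add_right,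
        real_inner_smul_left, real_inner_smul_left, real_inner_smul_left, real_inner_smul_left,
        real_inner_smul_right, real_inner_smul_right, real_inner_smul_right,
        real_inner_smul_right, hxe, hex, real_inner_self_eq_norm_sq, real_inner_self_eq_norm_sq,
        hx, he]
      ring
    have hy'x' : ⟪y', x'⟫ = 0 := by rw [real_inner_comm]; exact hx'y'
    have hW'' : ⟪T y', T x'⟫ = 0 := by rw [real_inner_comm]; exact hW'
    -- decompositions
    have hxd : x = Real.cos φ • x' + (-Real.sin φ) • y' := by
      have h1 : Real.cos φ • x' + (-Real.sin φ) • y'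
          = (Real.sin φ ^ 2 + Real.cos φ ^ 2) • x := by
        rw [hx'def, hy'def]; module
      rw [h1, hsc, one_smul]
    have hyd : y = (t * Real.cos φ + m * Real.sin φ) • x'
        + (-(t * Real.sin φ) + m * Real.cos φ) • y' := by
      have h1 : (t * Real.cos φ + m * Real.sin φ) • x'
          + (-(t * Real.sin φ) + m * Real.cos φ) • y'
          = ((Real.sin φ ^ 2 + Real.cos φ ^ 2) * t) • x
            + ((Real.sin φ ^ 2 + Real.cos φ ^ 2) * m) • e := by
        rw [hx'def, hy'def]; module
      rw [h1, hsc, one_mul, one_mul]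
      exact hym
    -- norm formulas
    obtain ⟨A', hA'⟩ : ∃ A' : ℝ, A' = ‖T x'‖ ^ 2 := ⟨_, rfl⟩
    obtain ⟨B', hB'⟩ : ∃ B' : ℝ, B' = ‖T y'‖ ^ 2 := ⟨_, rfl⟩
    have hA'0 : 0 ≤ A' := hA' ▸ sq_nonneg _
    have hB'0 : 0 ≤ B' := hB' ▸ sq_nonneg _
    have hnorm_comb : ∀ a b : ℝ, ‖T (a • x' + b • y')‖ ^ 2 = a ^ 2 * A' + b ^ 2 * B' := by
      intro a b
      rw [map_add, map_smul, map_smul, @norm_add_sq_real, norm_smul, norm_smul,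
        real_inner_smul_left, real_inner_smul_right, hW', Real.norm_eq_abs, Real.norm_eq_abs,
        hA', hB']
      simp [mul_pow, sq_abs]
    have hTx2 : ‖T x‖ ^ 2 = Real.cos φ ^ 2 * A' + (-Real.sin φ) ^ 2 * B' := by
      conv_lhs => rw [hxd]
      exact hnorm_comb _ _
    have hTy2 : ‖T y‖ ^ 2 = (t * Real.cos φ + m * Real.sin φ) ^ 2 * A'
        + (-(t * Real.sin φ) + m * Real.cos φ) ^ 2 * B' := by
      conv_lhs => rw [hyd]
      exact hnorm_comb _ _
    have hpq : (t * Real.cos φ + m * Real.sin φ) ^ 2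
        + (-(t * Real.sin φ) + m * Real.cos φ) ^ 2 = 1 := by
      have : (t * Real.cos φ + m * Real.sin φ) ^ 2
          + (-(t * Real.sin φ) + m * Real.cos φ) ^ 2
          = (t ^ 2 + m ^ 2) * (Real.sin φ ^ 2 + Real.cos φ ^ 2) := by ring
      rw [this, htm, hsc, one_mul]
    -- key lemma applications
    have h1 : g * B' ≤ A' := by
      have := key_lemma c ε hc0 hc1 hε0 T hpres x' y' hx'1 hy'1 hx'y' hW'
      rw [← hgdef, ← hA', ← hB'] at this
      exact this
    have h2 : g * A' ≤ B' := by
      have := key_lemma c ε hc0 hc1 hε0 T hpres y' x' hy'1 hx'1 hy'x' hW''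
      rw [← hgdef, ← hA', ← hB'] at this
      exact this
    have hg0' : 0 ≤ g := by
      rw [hgdef]
      exact div_nonneg (mul_nonneg (by linarith) (by linarith)) (le_of_lt hd)
    rw [hTx2, hTy2]
    have hab : Real.cos φ ^ 2 + (-Real.sin φ) ^ 2 = 1 := by
      ring_nf
      linarith [hsc]
    obtain ⟨a, hadef⟩ : ∃ a : ℝ, a = Real.cos φ := ⟨_, rfl⟩
    obtain ⟨b, hbdef⟩ : ∃ b : ℝ, b = -Real.sin φ := ⟨_, rfl⟩
    obtain ⟨p, hpdef⟩ : ∃ p : ℝ, p = t * Real.cos φ + m * Real.sin φ := ⟨_, rfl⟩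
    obtain ⟨q, hqdef⟩ : ∃ q : ℝ, q = -(t * Real.sin φ) + m * Real.cos φ := ⟨_, rfl⟩
    rw [← hpdef, ← hqdef, ← hadef, ← hbdef]
    rw [← hadef, ← hbdef] at hab
    rw [← hpdef, ← hqdef] at hpq
    exact combine_num g A' B' a b p q hg0' hA'0 hB'0 hab hpq h1 h2

end AuxProofs

theorem stmt_8 {H K : Type*} [NormedAddCommGroup H] [InnerProductSpace ℝ H] [CompleteSpace H]
    [NormedAddCommGroup K] [InnerProductSpace ℝ K] [CompleteSpace K]
    (c : ℝ) (hc : c ∈ Set.Ico (0 : ℝ) 1) (ε₀ : ℝ) (hε₀ : ε₀ ∈ Set.Ico (0 : ℝ) (1 + c))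
    (T : H →L[ℝ] K) (hinj : Function.Injective T) (hpres : AnglePres c ε₀ T) :
    Real.sqrt ((1 - c) * (1 + c - ε₀) / ((1 + c) * (1 - c + ε₀))) * ‖T‖ ≤ minMod T := by
  obtain ⟨hc0, hc1⟩ := hc
  obtain ⟨hε0, hε1⟩ := hε₀
  have hc1' : (0:ℝ) < 1 + c := by linarith
  have hd : (0:ℝ) < (1 + c) * (1 - c + ε₀) := by nlinarith
  obtain ⟨G, hGdef⟩ : ∃ G : ℝ, G = (1 - c) * (1 + c - ε₀) / ((1 + c) * (1 - c + ε₀)) := ⟨_, rfl⟩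
  rw [← hGdef]
  have hG0 : 0 < G := by
    rw [hGdef]
    exact div_pos (mul_pos (by linarith) (by linarith)) hd
  have hsq : 0 < Real.sqrt G := Real.sqrt_pos.mpr hG0
  have hmin0 : 0 ≤ minMod T := Real.iInf_nonneg fun x => norm_nonneg _
  by_cases hne : ∃ y : H, ‖y‖ = 1
  · obtain ⟨y₀, hy₀⟩ := hne
    haveI : Nonempty {x : H // ‖x‖ = 1} := ⟨⟨y₀, hy₀⟩⟩
    have hpair : ∀ x y : H, ‖x‖ = 1 → ‖y‖ = 1 → Real.sqrt G * ‖T y‖ ≤ ‖T x‖ := by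
      intro x y hx hy
      have h := pair_bound c ε₀ hc0 hc1 hε0 (le_of_lt hε1) T hpres x y hx hy
      rw [← hGdef] at h
      have h2 : Real.sqrt (G * ‖T y‖ ^ 2) ≤ Real.sqrt (‖T x‖ ^ 2) := Real.sqrt_le_sqrt h
      rwa [Real.sqrt_mul (le_of_lt hG0), Real.sqrt_sq (norm_nonneg _),
        Real.sqrt_sq (norm_nonneg _)] at h2
    have hkey : ∀ y : H, ‖y‖ = 1 → Real.sqrt G * ‖T y‖ ≤ minMod T := by
      intro y hy
      exact le_ciInf fun x => hpair x.1 y x.2 hy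
    have hT : ‖T‖ ≤ minMod T / Real.sqrt G := by
      apply T.opNorm_le_bound (div_nonneg hmin0 (le_of_lt hsq))
      intro z
      by_cases hz : z = 0
      · simp [hz]
      · have hz0 : 0 < ‖z‖ := norm_pos_iff.mpr hz
        have hy : ‖(‖z‖⁻¹ • z : H)‖ = 1 := by
          rw [norm_smul, Real.norm_eq_abs, abs_of_pos (inv_pos.mpr hz0),
            inv_mul_cancel₀ hz0.ne']
        have hTz : ‖T z‖ = ‖z‖ * ‖T (‖z‖⁻¹ • z)‖ := by
          rw [map_smul, norm_smul, Real.norm_eq_abs, abs_of_pos (inv_pos.mpr hz0)]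
          field_simp
        rw [hTz, mul_comm (minMod T / Real.sqrt G) ‖z‖]
        apply mul_le_mul_of_nonneg_left _ (le_of_lt hz0)
        rw [le_div_iff₀ hsq, mul_comm]
        exact hkey _ hy
    calc Real.sqrt G * ‖T‖ ≤ Real.sqrt G * (minMod T / Real.sqrt G) :=
          mul_le_mul_of_nonneg_left hT (Real.sqrt_nonneg G)
      _ = minMod T := by field_simp
  · have hz : ∀ z : H, z = 0 := by
      intro z
      by_contra hzz
      have hz0 : 0 < ‖z‖ := norm_pos_iff.mpr hzz
      exact hne ⟨‖z‖⁻¹ • z, by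
        rw [norm_smul, Real.norm_eq_abs, abs_of_pos (inv_pos.mpr hz0), inv_mul_cancel₀ hz0.ne']⟩
    have hT0 : ‖T‖ = 0 := by
      have hTz : T = 0 := by ext z; rw [hz z]; simp
      rw [hTz]; simp
    rw [hT0, mul_zero]
    exact hmin0
end

section
/- Let c ∈ [0,1) and let T : H → K be a nonzero bounded linear map between real Hilbert spaces with [T] = 0. Then for every ε < 1 + c, T is not (ε, c)-angle preserving; that is, the smallest ε for which T is (ε,c)-angle preserving equals 1 + c. -/
open scoped RealInnerProductSpace

lemma anglePres_mono {H K : Type*} [NormedAddCommGroup H] [InnerProductSpace ℝ H]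
    [NormedAddCommGroup K] [InnerProductSpace ℝ K] {c ε ε' : ℝ} {T : H →L[ℝ] K}
    (h : AnglePres c ε T) (hle : ε ≤ ε') : AnglePres c ε' T := by
  intro x y hxy
  calc |⟪T x, T y⟫ - c * ‖T x‖ * ‖T y‖| ≤ ε * ‖T x‖ * ‖T y‖ := h x y hxy
    _ ≤ ε' * ‖T x‖ * ‖T y‖ := by
        have h1 : (0:ℝ) ≤ ‖T x‖ * ‖T y‖ := by positivity
        rw [mul_assoc, mul_assoc]
        exact mul_le_mul_of_nonneg_right hle h1

lemma arith_contra (c ε M p q d N P Q : ℝ)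
    (hεc : c ≤ ε) (hε : ε < 1 + c) (hM0 : 0 < M)
    (hp0 : 0 < p) (hq0 : 0 < q)
    (hd0 : 0 ≤ d) (hd1 : d < 1)
    (hdC : 4 * (2 * p * q * M + 2 * p ^ 2 + 1) * d < (1 - (ε - c)) * q ^ 2 * M ^ 2)
    (hN1 : M / 2 < N) (hN2 : N ≤ M) (hP0 : 0 ≤ P) (hQ0 : 0 ≤ Q)
    (hnormu : P ≤ p * d + q * N) (hnormv : Q ≤ p * d + q * N)
    (hlow : -(ε * P * Q) ≤ p ^ 2 * d ^ 2 - q ^ 2 * N ^ 2 - c * P * Q) : False := by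
  have ht0 : 0 ≤ ε - c := by linarith
  have ht1 : ε - c < 1 := by linarith
  have hN0 : 0 < N := by linarith
  have hNsq : M ^ 2 / 4 ≤ N ^ 2 := by nlinarith [mul_pos hM0 hM0]
  have h4 : (ε - c) * N ≤ M := by
    have h5 : (ε - c) * N ≤ 1 * N := mul_le_mul_of_nonneg_right (by linarith) hN0.le
    linarith
  have e1 : p ^ 2 * (d * d) ≤ p ^ 2 * d :=
    mul_le_mul_of_nonneg_left (mul_le_of_le_one_right hd0 hd1.le) (sq_nonneg p)
  have e1' : (ε - c) * (p ^ 2 * (d * d)) ≤ 1 * (p ^ 2 * (d * d)) :=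
    mul_le_mul_of_nonneg_right (by linarith) (by positivity)
  have e2 : p * q * d * ((ε - c) * N) ≤ p * q * d * M :=
    mul_le_mul_of_nonneg_left h4 (by positivity)
  have e3 : (1 - (ε - c)) * q ^ 2 * (M ^ 2 / 4) ≤ (1 - (ε - c)) * q ^ 2 * N ^ 2 :=
    mul_le_mul_of_nonneg_left hNsq (by nlinarith [sq_nonneg q])
  have hkey : p ^ 2 * d ^ 2 - q ^ 2 * N ^ 2 <
      (c - ε) * ((p * d + q * N) * (p * d + q * N)) := by
    linarith [e1, e1', e2, e3, hdC, hd0]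
  have hPQ : P * Q ≤ (p * d + q * N) * (p * d + q * N) :=
    mul_le_mul hnormu hnormv hQ0 (hP0.trans hnormu)
  have h2 : (c - ε) * ((p * d + q * N) * (p * d + q * N)) ≤ (c - ε) * (P * Q) :=
    mul_le_mul_of_nonpos_left hPQ (by linarith)
  linarith [hlow, hkey, h2]

set_option maxHeartbeats 1000000 in
lemma key_not_anglePres {H K : Type*} [NormedAddCommGroup H] [InnerProductSpace ℝ H]
    [NormedAddCommGroup K] [InnerProductSpace ℝ K]
    (c ε : ℝ) (hc : c ∈ Set.Ico (0 : ℝ) 1) (T : H →L[ℝ] K) (hT : T ≠ 0)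
    (hmin : minMod T = 0) (hεc : c ≤ ε) (hε : ε < 1 + c) : ¬ AnglePres c ε T := by
  intro hA
  obtain ⟨hc0, hc1⟩ := hc
  obtain ⟨M, hM⟩ : ∃ M : ℝ, M = ‖T‖ := ⟨_, rfl⟩
  have hM0 : 0 < M := by
    rw [hM, norm_pos_iff]; exact hT
  obtain ⟨p, hp0, hp2⟩ : ∃ p : ℝ, 0 < p ∧ p ^ 2 = (1 + c) / 2 :=
    ⟨Real.sqrt ((1 + c) / 2), Real.sqrt_pos.mpr (by linarith), Real.sq_sqrt (by linarith)⟩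
  obtain ⟨q, hq0, hq2⟩ : ∃ q : ℝ, 0 < q ∧ q ^ 2 = (1 - c) / 2 :=
    ⟨Real.sqrt ((1 - c) / 2), Real.sqrt_pos.mpr (by linarith), Real.sq_sqrt (by linarith)⟩
  have ht0 : 0 ≤ ε - c := by linarith
  have ht1 : ε - c < 1 := by linarith
  have hC0 : 0 < 2 * p * q * M + 2 * p ^ 2 + 1 := by positivity
  obtain ⟨δ, hδ0, hδM, hδ1, hδC⟩ : ∃ δ : ℝ, 0 < δ ∧ δ ≤ M / 4 ∧ δ ≤ 1 ∧
      4 * (2 * p * q * M + 2 * p ^ 2 + 1) * δ ≤ (1 - (ε - c)) * q ^ 2 * M ^ 2 := by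
    refine ⟨min (min (M / 4) 1)
      ((1 - (ε - c)) * q ^ 2 * M ^ 2 / (4 * (2 * p * q * M + 2 * p ^ 2 + 1))), ?_, ?_, ?_, ?_⟩
    · apply lt_min (lt_min (by linarith) one_pos)
      exact div_pos (mul_pos (mul_pos (by linarith) (pow_pos hq0 2)) (pow_pos hM0 2))
        (by positivity)
    · exact (min_le_left _ _).trans (min_le_left _ _)
    · exact (min_le_left _ _).trans (min_le_right _ _)
    · have h := min_le_right (min (M / 4) 1)
        ((1 - (ε - c)) * q ^ 2 * M ^ 2 / (4 * (2 * p * q * M + 2 * p ^ 2 + 1)))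
      calc 4 * (2 * p * q * M + 2 * p ^ 2 + 1) *
            min (min (M / 4) 1)
              ((1 - (ε - c)) * q ^ 2 * M ^ 2 / (4 * (2 * p * q * M + 2 * p ^ 2 + 1)))
          ≤ 4 * (2 * p * q * M + 2 * p ^ 2 + 1) *
            ((1 - (ε - c)) * q ^ 2 * M ^ 2 / (4 * (2 * p * q * M + 2 * p ^ 2 + 1))) := by
            apply mul_le_mul_of_nonneg_left h (by positivity)
        _ = (1 - (ε - c)) * q ^ 2 * M ^ 2 := by
            field_simp
  -- a unit vector x with ‖T x‖ < δ
  haveI : Nonempty {x : H // ‖x‖ = 1} := by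
    obtain ⟨v, hv⟩ := DFunLike.ne_iff.mp hT
    have hv0 : v ≠ 0 := by rintro rfl; simp at hv
    exact ⟨⟨‖v‖⁻¹ • v, by
      rw [norm_smul, norm_inv, norm_norm, inv_mul_cancel₀ (norm_ne_zero_iff.mpr hv0)]⟩⟩
  obtain ⟨⟨x, hx1⟩, hxδ⟩ : ∃ i : {x : H // ‖x‖ = 1}, ‖T i‖ < δ := by
    apply exists_lt_of_ciInf_lt
    rw [show (⨅ x : {x : H // ‖x‖ = 1}, ‖T x‖) = minMod T from rfl, hmin]
    exact hδ0
  simp only at hxδ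
  obtain ⟨d, hd⟩ : ∃ d : ℝ, d = ‖T x‖ := ⟨_, rfl⟩
  rw [← hd] at hxδ
  have hd0 : 0 ≤ d := hd ▸ norm_nonneg _
  have hdM : d < M / 4 := lt_of_lt_of_le hxδ hδM
  have hd1 : d < 1 := lt_of_lt_of_le hxδ hδ1
  have hdC : 4 * (2 * p * q * M + 2 * p ^ 2 + 1) * d < (1 - (ε - c)) * q ^ 2 * M ^ 2 :=
    lt_of_lt_of_le (by nlinarith) hδC
  -- a unit vector w with ‖T w‖ > 3M/4
  obtain ⟨w, hw1, hTw⟩ : ∃ w : H, ‖w‖ = 1 ∧ 3 * M / 4 < ‖T w‖ := by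
    obtain ⟨w₀, hw₀1, hw₀2⟩ := T.exists_lt_apply_of_lt_opNorm (show 3 * M / 4 < ‖T‖ by
      rw [← hM]; linarith)
    have hTw₀ : T w₀ ≠ 0 := by
      intro h; rw [h] at hw₀2; simp at hw₀2; linarith
    have hw₀0 : w₀ ≠ 0 := by rintro rfl; simp at hTw₀
    have hw₀pos : 0 < ‖w₀‖ := norm_pos_iff.mpr hw₀0
    refine ⟨‖w₀‖⁻¹ • w₀, ?_, ?_⟩
    · rw [norm_smul, norm_inv, norm_norm, inv_mul_cancel₀ (norm_ne_zero_iff.mpr hw₀0)]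
    · rw [map_smul, norm_smul, norm_inv, norm_norm]
      have h1 : (1:ℝ) ≤ ‖w₀‖⁻¹ := (one_le_inv₀ hw₀pos).2 (le_of_lt hw₀1)
      nlinarith [norm_nonneg (T w₀)]
  -- a unit vector z orthogonal to x on which T is large
  obtain ⟨z, hz1, hxz, hN1'⟩ : ∃ z : H, ‖z‖ = 1 ∧ ⟪x, z⟫ = 0 ∧ M / 2 < ‖T z‖ := by
    have hxx : ⟪x, x⟫ = 1 := by
      rw [real_inner_self_eq_norm_sq, hx1]; norm_num
    have hxz' : ⟪x, w - ⟪w, x⟫ • x⟫ = 0 := by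
      rw [inner_sub_right, real_inner_smul_right, hxx, real_inner_comm x w]
      ring
    have hz'le : ‖w - ⟪w, x⟫ • x‖ ≤ 1 := by
      have h1 : ⟪w - ⟪w, x⟫ • x, w - ⟪w, x⟫ • x⟫ = ⟪w, w - ⟪w, x⟫ • x⟫ := by
        rw [inner_sub_left, real_inner_smul_left, hxz']
        ring
      have h2 : ⟪w, w - ⟪w, x⟫ • x⟫ ≤ ‖w‖ * ‖w - ⟪w, x⟫ • x‖ := real_inner_le_norm _ _
      have h3 : ⟪w - ⟪w, x⟫ • x, w - ⟪w, x⟫ • x⟫ = ‖w - ⟪w, x⟫ • x‖ ^ 2 :=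
        real_inner_self_eq_norm_sq _
      rw [hw1] at h2
      nlinarith [norm_nonneg (w - ⟪w, x⟫ • x)]
    have hTz' : M / 2 < ‖T (w - ⟪w, x⟫ • x)‖ := by
      have h1 : T (w - ⟪w, x⟫ • x) = T w - ⟪w, x⟫ • T x := by simp
      have h2 : ‖T w‖ - ‖⟪w, x⟫ • T x‖ ≤ ‖T (w - ⟪w, x⟫ • x)‖ := by
        rw [h1]; linarith [norm_sub_norm_le (T w) (⟪w, x⟫ • T x)]
      have h3 : ‖⟪w, x⟫ • T x‖ ≤ d := by
        rw [norm_smul, Real.norm_eq_abs, ← hd]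
        have h5 := abs_real_inner_le_norm w x
        rw [hw1, hx1] at h5
        nlinarith [hd0, abs_nonneg (⟪w, x⟫ : ℝ)]
      linarith
    have hz'0 : w - ⟪w, x⟫ • x ≠ 0 := by
      intro h; rw [h] at hTz'; simp at hTz'; linarith
    have hz'pos : 0 < ‖w - ⟪w, x⟫ • x‖ := norm_pos_iff.mpr hz'0
    refine ⟨‖w - ⟪w, x⟫ • x‖⁻¹ • (w - ⟪w, x⟫ • x), ?_, ?_, ?_⟩
    · rw [norm_smul, norm_inv, norm_norm, inv_mul_cancel₀ (norm_ne_zero_iff.mpr hz'0)]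
    · rw [real_inner_smul_right, hxz', mul_zero]
    · rw [map_smul, norm_smul, norm_inv, norm_norm]
      have h1 : (1:ℝ) ≤ ‖w - ⟪w, x⟫ • x‖⁻¹ := (one_le_inv₀ hz'pos).2 hz'le
      nlinarith [norm_nonneg (T (w - ⟪w, x⟫ • x))]
  obtain ⟨N, hN⟩ : ∃ N : ℝ, N = ‖T z‖ := ⟨_, rfl⟩
  have hN1 : M / 2 < N := hN ▸ hN1'
  have hN2 : N ≤ M := by
    rw [hN, hM]
    calc ‖T z‖ ≤ ‖T‖ * ‖z‖ := T.le_opNorm z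
      _ = ‖T‖ := by rw [hz1, mul_one]
  -- the test vectors
  have hzx : ⟪z, x⟫ = 0 := by rw [real_inner_comm]; exact hxz
  have hxx : ⟪x, x⟫ = 1 := by rw [real_inner_self_eq_norm_sq, hx1]; norm_num
  have hzz : ⟪z, z⟫ = 1 := by rw [real_inner_self_eq_norm_sq, hz1]; norm_num
  have huv : ⟪p • x + q • z, p • x - q • z⟫ = c := by
    simp only [inner_add_left, inner_sub_right, real_inner_smul_left, real_inner_smul_right,
      hxz, hzx, hxx, hzz]
    nlinarith [hp2, hq2]
  have hu1 : ‖p • x + q • z‖ = 1 := by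
    have h : ‖p • x + q • z‖ ^ 2 = 1 := by
      rw [← real_inner_self_eq_norm_sq]
      simp only [inner_add_left, inner_add_right, real_inner_smul_left, real_inner_smul_right,
        hxz, hzx, hxx, hzz]
      nlinarith [hp2, hq2]
    rw [← Real.sqrt_sq (norm_nonneg _), h, Real.sqrt_one]
  have hv1 : ‖p • x - q • z‖ = 1 := by
    have h : ‖p • x - q • z‖ ^ 2 = 1 := by
      rw [← real_inner_self_eq_norm_sq]
      simp only [inner_sub_left, inner_sub_right, real_inner_smul_left, real_inner_smul_right,
        hxz, hzx, hxx, hzz]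
      nlinarith [hp2, hq2]
    rw [← Real.sqrt_sq (norm_nonneg _), h, Real.sqrt_one]
  have hTu : T (p • x + q • z) = p • T x + q • T z := by simp
  have hTv : T (p • x - q • z) = p • T x - q • T z := by simp
  have hinner : ⟪T (p • x + q • z), T (p • x - q • z)⟫ = p ^ 2 * d ^ 2 - q ^ 2 * N ^ 2 := by
    rw [hTu, hTv]
    have hcomm : ⟪T z, T x⟫ = ⟪T x, T z⟫ := real_inner_comm _ _
    have hxx' : ⟪T x, T x⟫ = d ^ 2 := by rw [real_inner_self_eq_norm_sq, hd]
    have hzz' : ⟪T z, T z⟫ = N ^ 2 := by rw [real_inner_self_eq_norm_sq, hN]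
    simp only [inner_add_left, inner_sub_right, real_inner_smul_left, real_inner_smul_right,
      hxx', hzz', hcomm]
    ring
  have hnormu : ‖T (p • x + q • z)‖ ≤ p * d + q * N := by
    rw [hTu, hd, hN]
    calc ‖p • T x + q • T z‖ ≤ ‖p • T x‖ + ‖q • T z‖ := norm_add_le _ _
      _ = p * ‖T x‖ + q * ‖T z‖ := by
          rw [norm_smul, norm_smul, Real.norm_eq_abs, Real.norm_eq_abs,
            abs_of_pos hp0, abs_of_pos hq0]
  have hnormv : ‖T (p • x - q • z)‖ ≤ p * d + q * N := by
    rw [hTv, hd, hN]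
    calc ‖p • T x - q • T z‖ ≤ ‖p • T x‖ + ‖q • T z‖ := norm_sub_le _ _
      _ = p * ‖T x‖ + q * ‖T z‖ := by
          rw [norm_smul, norm_smul, Real.norm_eq_abs, Real.norm_eq_abs,
            abs_of_pos hp0, abs_of_pos hq0]
  -- apply the angle-preserving hypothesis
  have hhyp : ⟪p • x + q • z, p • x - q • z⟫ = c * ‖p • x + q • z‖ * ‖p • x - q • z‖ := by
    rw [huv, hu1, hv1]; ring
  have habs := hA (p • x + q • z) (p • x - q • z) hhyp
  obtain ⟨P, hP⟩ : ∃ P : ℝ, P = ‖T (p • x + q • z)‖ := ⟨_, rfl⟩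
  obtain ⟨Q, hQ⟩ : ∃ Q : ℝ, Q = ‖T (p • x - q • z)‖ := ⟨_, rfl⟩
  rw [← hP, ← hQ] at habs
  rw [← hP] at hnormu
  rw [← hQ] at hnormv
  have hP0 : 0 ≤ P := hP ▸ norm_nonneg _
  have hQ0 : 0 ≤ Q := hQ ▸ norm_nonneg _
  have hlow : -(ε * P * Q) ≤ ⟪T (p • x + q • z), T (p • x - q • z)⟫ - c * P * Q :=
    neg_le_of_abs_le habs
  rw [hinner] at hlow
  exact arith_contra c ε M p q d N P Q hεc hε hM0 hp0 hq0 hd0 hd1 hdC hN1 hN2 hP0 hQ0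
    hnormu hnormv hlow

theorem stmt_9 {H K : Type*} [NormedAddCommGroup H] [InnerProductSpace ℝ H] [CompleteSpace H]
    [NormedAddCommGroup K] [InnerProductSpace ℝ K] [CompleteSpace K]
    (hH : 2 ≤ Module.rank ℝ H)
    (c : ℝ) (hc : c ∈ Set.Ico (0 : ℝ) 1) (T : H →L[ℝ] K) (hT : T ≠ 0)
    (hmin : minMod T = 0) :
    (∀ ε : ℝ, ε < 1 + c → ¬ AnglePres c ε T) ∧ epsHat c T = 1 + c := by
  have hc0 := hc.1
  have hc1 := hc.2
  have hmain : ∀ ε : ℝ, ε < 1 + c → ¬ AnglePres c ε T := by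
    intro ε hε hA
    have hmax : AnglePres c (max ε c) T := anglePres_mono hA (le_max_left _ _)
    exact key_not_anglePres c (max ε c) hc T hT hmin (le_max_right _ _)
      (max_lt hε (by linarith)) hmax
  refine ⟨hmain, ?_⟩
  have habs : |c| = c := abs_of_nonneg hc0
  have hmem : (1 + c) ∈ {ε : ℝ | ε ∈ Set.Icc 0 (1 + |c|) ∧ AnglePres c ε T} := by
    constructor
    · rw [habs]; exact ⟨by linarith, le_rfl⟩
    · intro x y hxy
      have h1 : |⟪T x, T y⟫| ≤ ‖T x‖ * ‖T y‖ := abs_real_inner_le_norm _ _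
      have h2 : |⟪T x, T y⟫ - c * ‖T x‖ * ‖T y‖| ≤ |⟪T x, T y⟫| + |c * ‖T x‖ * ‖T y‖| :=
        abs_sub _ _
      have h3 : |c * ‖T x‖ * ‖T y‖| = c * ‖T x‖ * ‖T y‖ := by
        apply abs_of_nonneg; positivity
      nlinarith [norm_nonneg (T x), norm_nonneg (T y)]
  unfold epsHat
  apply le_antisymm
  · exact csInf_le ⟨0, fun a ha => ha.1.1⟩ hmem
  · apply le_csInf ⟨1 + c, hmem⟩
    intro ε hε
    by_contra hlt
    push_neg at hlt
    exact hmain ε hlt hε.2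
end

section
/- Let c ∈ [0,1) and let T ∈ B(H,K) with [T] > 0. Suppose x₁, x₂ are unit vectors with x₁ ⊥ x₂, Tx₁ ⊥ Tx₂, ‖Tx₁‖ = [T], ‖Tx₂‖ = ‖T‖. Put u = x₂ + √((1-c)/(1+c))·x₁ and v = x₂ − √((1-c)/(1+c))·x₁. Then |⟨Tu,Tv⟩/(‖Tu‖·‖Tv‖) − c| = (1−c²)(‖T‖² − [T]²)/((1+c)‖T‖² + (1−c)[T]²). -/
open scoped RealInnerProductSpace

/-! The images `T u = T x₂ + s • T x₁` and `T v = T x₂ - s • T x₁` are the diagonals of a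
rectangle with sides `‖T‖` and `s [T]`, so the cosine of their angle is
`(‖T‖² - s² [T]²) / (‖T‖² + s² [T]²)`; with `s² = (1 - c) / (1 + c)` the rest is algebra. -/

theorem real_inner_add_sub_eq_norm_sq_sub_norm_sq {E : Type*} [NormedAddCommGroup E]
    [InnerProductSpace ℝ E] (a b : E) : ⟪a + b, a - b⟫ = ‖a‖ ^ 2 - ‖b‖ ^ 2 := by
  simp only [inner_add_left, inner_sub_right, real_inner_self_eq_norm_sq, real_inner_comm a b]
  ring

theorem real_inner_add_sub_div_norm_mul_norm_of_inner_eq_zero {E : Type*}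
    [NormedAddCommGroup E] [InnerProductSpace ℝ E] {a b : E} (h : ⟪a, b⟫ = 0) :
    ⟪a + b, a - b⟫ / (‖a + b‖ * ‖a - b‖) = (‖a‖ ^ 2 - ‖b‖ ^ 2) / (‖a‖ ^ 2 + ‖b‖ ^ 2) := by
  have h' : ⟪b, a⟫ = 0 := by rwa [real_inner_comm]
  rw [norm_sub_eq_norm_add h', norm_add_sq_eq_norm_sq_add_norm_sq_real h,
    real_inner_add_sub_eq_norm_sq_sub_norm_sq, sq, sq]

theorem abs_diagonal_cos_sub_eq {c p q : ℝ} (hc₀ : -1 < c) (hc₁ : c < 1) (hq : 0 < q)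
    (hqp : q ≤ p) :
    |(p - (1 - c) / (1 + c) * q) / (p + (1 - c) / (1 + c) * q) - c| =
      (1 - c ^ 2) * (p - q) / ((1 + c) * p + (1 - c) * q) := by
  have h1c : 0 < 1 + c := by linarith
  have h2c : 0 < 1 - c := by linarith
  have hD : 0 < (1 + c) * p + (1 - c) * q := by nlinarith
  have hE : 0 < p + (1 - c) / (1 + c) * q := by
    have := mul_pos (div_pos h2c h1c) hq
    linarith
  have hratio : (p - (1 - c) / (1 + c) * q) / (p + (1 - c) / (1 + c) * q) - c =
      (1 - c ^ 2) * (p - q) / ((1 + c) * p + (1 - c) * q) := by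
    rw [div_sub' hE.ne', div_eq_div_iff hE.ne' hD.ne']
    field_simp
    ring
  rw [hratio, abs_of_nonneg]
  exact div_nonneg (mul_nonneg (by nlinarith) (by linarith)) hD.le

theorem stmt_10_general {H K : Type*} [NormedAddCommGroup H] [InnerProductSpace ℝ H]
    [NormedAddCommGroup K] [InnerProductSpace ℝ K]
    (c : ℝ) (hc : c ∈ Set.Ico (0 : ℝ) 1) (T : H →L[ℝ] K) (hmin : 0 < minMod T)
    (x₁ x₂ : H) (hx₁ : ‖x₁‖ = 1)
    (horthT : ⟪T x₁, T x₂⟫ = 0) (h₁ : ‖T x₁‖ = minMod T) (h₂ : ‖T x₂‖ = ‖T‖)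
    (u v : H) (hu : u = x₂ + Real.sqrt ((1 - c) / (1 + c)) • x₁)
    (hv : v = x₂ - Real.sqrt ((1 - c) / (1 + c)) • x₁) :
    |⟪T u, T v⟫ / (‖T u‖ * ‖T v‖) - c| =
      (1 - c ^ 2) * (‖T‖ ^ 2 - (minMod T) ^ 2) /
        ((1 + c) * ‖T‖ ^ 2 + (1 - c) * (minMod T) ^ 2) := by
  set s := Real.sqrt ((1 - c) / (1 + c))
  have hs : s ^ 2 = (1 - c) / (1 + c) :=
    Real.sq_sqrt (div_nonneg (by linarith [hc.2]) (by linarith [hc.1]))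
  have hmM : minMod T ≤ ‖T‖ := h₁ ▸ T.unit_le_opNorm x₁ hx₁.le
  have horth : ⟪T x₂, s • T x₁⟫ = 0 := by
    rw [real_inner_smul_right, real_inner_comm, horthT, mul_zero]
  have hside : ‖s • T x₁‖ ^ 2 = (1 - c) / (1 + c) * minMod T ^ 2 := by
    rw [norm_smul, mul_pow, Real.norm_eq_abs, sq_abs, hs, h₁]
  rw [hu, hv, map_add, map_sub, map_smul,
    real_inner_add_sub_div_norm_mul_norm_of_inner_eq_zero horth, h₂, hside]
  exact abs_diagonal_cos_sub_eq (by linarith [hc.1]) hc.2 (by positivity)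
    (pow_le_pow_left₀ hmin.le hmM 2)

theorem stmt_10 {H K : Type*} [NormedAddCommGroup H] [InnerProductSpace ℝ H] [CompleteSpace H]
    [NormedAddCommGroup K] [InnerProductSpace ℝ K] [CompleteSpace K]
    (c : ℝ) (hc : c ∈ Set.Ico (0 : ℝ) 1) (T : H →L[ℝ] K) (hmin : 0 < minMod T)
    (x₁ x₂ : H) (hx₁ : ‖x₁‖ = 1) (hx₂ : ‖x₂‖ = 1) (horth : ⟪x₁, x₂⟫ = 0)
    (horthT : ⟪T x₁, T x₂⟫ = 0) (h₁ : ‖T x₁‖ = minMod T) (h₂ : ‖T x₂‖ = ‖T‖)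
    (u v : H) (hu : u = x₂ + Real.sqrt ((1 - c) / (1 + c)) • x₁)
    (hv : v = x₂ - Real.sqrt ((1 - c) / (1 + c)) • x₁) :
    |⟪T u, T v⟫ / (‖T u‖ * ‖T v‖) - c| =
      (1 - c ^ 2) * (‖T‖ ^ 2 - (minMod T) ^ 2) /
        ((1 + c) * ‖T‖ ^ 2 + (1 - c) * (minMod T) ^ 2) :=
  stmt_10_general c hc T hmin x₁ x₂ hx₁ horthT h₁ h₂ u v hu hv
end

section
/- Let c ∈ [0,1) and T ∈ B(H,K) with [T] > 0. Then for all unit vectors x, y ∈ H with ⟨x,y⟩ = c, we have ⟨Tx/‖Tx‖, Ty/‖Ty‖⟩ − c ≤ (1−c²)(‖T‖² − [T]²)/((1+c)‖T‖² + (1−c)[T]²). -/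
open scoped RealInnerProductSpace

set_option maxHeartbeats 1000000 in
lemma keypoly (α β g h A B : ℝ) (hβ : 0 < β) (hβg : β ≤ g) (hgα : g ≤ α)
    (hrel : α * β = g * h) (hA1 : g ≤ A) (hA2 : A ≤ α) (hB1 : β ≤ B) (hB2 : B ≤ h) :
    α * β * (A - B)^2 ≤ (α - β)^2 * (β * (A - g) + g * B) := by
  have hg : 0 < g := hβ.trans_le hβg
  have hα : 0 < α := hg.trans_le hgα
  have hhα : h ≤ α := by
    have : g * h ≤ g * α := by nlinarith
    exact le_of_mul_le_mul_left this hg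
  rcases le_or_gt B A with hAB | hAB
  · have h1 : α * β * (A - B) ≤ (α - β) * (β * A + g * B - g * β) := by
      nlinarith [mul_nonneg (mul_nonneg hα.le hβ.le) (sub_nonneg.2 hB1),
        mul_nonneg (mul_nonneg (sub_nonneg.2 (hβg.trans hgα)) hg.le) (sub_nonneg.2 hB1),
        mul_nonneg (sq_nonneg β) (sub_nonneg.2 hA2)]
    have hX : 0 ≤ β * A + g * B - g * β := by nlinarith
    have h2 : (A - B) * (α * β * (A - B)) ≤ (A - B) * ((α - β) * (β * A + g * B - g * β)) :=
      mul_le_mul_of_nonneg_left h1 (sub_nonneg.2 hAB)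
    have hABle : A - B ≤ α - β := by linarith
    have h3 : (A - B) * ((α - β) * (β * A + g * B - g * β)) ≤
        (α - β) * ((α - β) * (β * A + g * B - g * β)) :=
      mul_le_mul_of_nonneg_right hABle (mul_nonneg (by linarith [hβg.trans hgα]) hX)
    nlinarith [h2, h3]
  · have hgh : g < h := by linarith [hA1, hB2]
    have hh : 0 < h := hg.trans hgh
    have c1 : α*β*(A-B)^2 ≤ α*β*((h-g)*(B-A)) := by
      nlinarith [mul_nonneg (mul_nonneg (mul_nonneg hα.le hβ.le) (sub_nonneg.2 hAB.le))
        (show (0:ℝ) ≤ (h-g)-(B-A) by linarith)]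
    have c2 : α*β*((h-g)*(B-A)) = g*h*((h-g)*(B-A)) := by rw [hrel]
    have c3 : g*h*((h-g)*(B-A)) ≤ g*h*((h-g)*(B-g)) := by
      nlinarith [mul_nonneg (mul_nonneg (mul_nonneg hg.le hh.le) (sub_nonneg.2 hgh.le))
        (sub_nonneg.2 hA1)]
    have c4 : g*h*((h-g)*(B-g)) ≤ g*(h-g)^2*B := by
      nlinarith [mul_nonneg (mul_nonneg (mul_nonneg hg.le hg.le) (sub_nonneg.2 hgh.le))
        (sub_nonneg.2 hB2)]
    have c5 : g*(h-g)^2*B ≤ g*(α-β)^2*B := by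
      nlinarith [mul_nonneg (mul_nonneg hg.le (hβ.le.trans hB1))
        (show (0:ℝ) ≤ (α-β)^2-(h-g)^2 by nlinarith)]
    nlinarith [c1, c2, c3, c4, c5,
      mul_nonneg (mul_nonneg (sq_nonneg (α-β)) hβ.le) (sub_nonneg.2 hA1)]

set_option maxHeartbeats 1000000 in
theorem stmt_11 {H K : Type*} [NormedAddCommGroup H] [InnerProductSpace ℝ H] [CompleteSpace H]
    [NormedAddCommGroup K] [InnerProductSpace ℝ K] [CompleteSpace K]
    (c : ℝ) (hc : c ∈ Set.Ico (0 : ℝ) 1) (T : H →L[ℝ] K) (hmin : 0 < minMod T)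
    (x y : H) (hx : ‖x‖ = 1) (hy : ‖y‖ = 1) (hxy : ⟪x, y⟫ = c) :
    ⟪‖T x‖⁻¹ • T x, ‖T y‖⁻¹ • T y⟫ - c ≤
      (1 - c ^ 2) * (‖T‖ ^ 2 - (minMod T) ^ 2) /
        ((1 + c) * ‖T‖ ^ 2 + (1 - c) * (minMod T) ^ 2) := by
  obtain ⟨hc0, hc1⟩ := hc
  set m : ℝ := minMod T with hm_def
  set M : ℝ := ‖T‖ with hM_def
  have hM0 : 0 ≤ M := norm_nonneg T
  -- lower bound m ‖z‖ ≤ ‖T z‖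
  have hbdd : BddBelow (Set.range fun z : {z : H // ‖z‖ = 1} => ‖T z‖) := by
    refine ⟨0, ?_⟩
    rintro _ ⟨w, rfl⟩
    positivity
  have hmz : ∀ z : H, m * ‖z‖ ≤ ‖T z‖ := by
    intro z
    rcases eq_or_ne z 0 with rfl | hz
    · simp
    · have hz0 : (0:ℝ) < ‖z‖ := norm_pos_iff.2 hz
      have hz' : ‖(‖z‖⁻¹ • z)‖ = 1 := norm_smul_inv_norm hz
      have h1 : m ≤ ‖T (‖z‖⁻¹ • z)‖ := ciInf_le hbdd ⟨_, hz'⟩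
      rw [map_smul, norm_smul, norm_inv, norm_norm] at h1
      calc m * ‖z‖ ≤ (‖z‖⁻¹ * ‖T z‖) * ‖z‖ := by
            exact mul_le_mul_of_nonneg_right h1 hz0.le
        _ = ‖T z‖ := by field_simp
  have hMz : ∀ z : H, ‖T z‖ ≤ M * ‖z‖ := fun z => T.le_opNorm z
  have hmM : m ≤ M := by
    have := (hmz x).trans (hMz x)
    rw [hx] at this; linarith
  have hm2 : 0 < m^2 := by positivity
  have hmM2 : m^2 ≤ M^2 := by nlinarith
  have hbpos : 0 < (2-2*c)*m^2 := by nlinarith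
  have hbg : (2-2*c)*m^2 ≤ (2+2*c)*m^2 := by nlinarith
  have hga : (2+2*c)*m^2 ≤ (2+2*c)*M^2 := by nlinarith
  have hN : 0 < (1 + c) * M^2 + (1 - c) * m^2 := by nlinarith
  have hKc : 0 ≤ (1 + c) * M^2 - (1 - c) * m^2 := by nlinarith
  set a : ℝ := ‖T x‖ with ha_def
  set b : ℝ := ‖T y‖ with hb_def
  set p : ℝ := ⟪T x, T y⟫ with hp_def
  have ha : 0 < a := by
    have h1 := hmz x; rw [hx, mul_one] at h1; exact hmin.trans_le h1
  have hb : 0 < b := by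
    have h1 := hmz y; rw [hy, mul_one] at h1; exact hmin.trans_le h1
  -- norms of x+y, x-y
  have hw1 : ‖x + y‖^2 = 2 + 2*c := by
    rw [norm_add_sq_real, hx, hy, hxy]; ring
  have hw2 : ‖x - y‖^2 = 2 - 2*c := by
    rw [norm_sub_sq_real, hx, hy, hxy]; ring
  have hxyo : ⟪x + y, x - y⟫ = 0 := by
    rw [inner_sub_right, inner_add_left, inner_add_left, real_inner_comm y x,
      real_inner_self_eq_norm_sq, real_inner_self_eq_norm_sq, hx, hy]
    ring
  -- A, B, C in terms of a, b, p
  have hA : ‖T (x + y)‖^2 = a^2 + 2*p + b^2 := by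
    rw [map_add, norm_add_sq_real]
  have hB : ‖T (x - y)‖^2 = a^2 - 2*p + b^2 := by
    rw [map_sub, norm_sub_sq_real]
  have hC : ⟪T (x + y), T (x - y)⟫ = a^2 - b^2 := by
    rw [map_add, map_sub, inner_sub_right, inner_add_left, inner_add_left,
      real_inner_comm (T y) (T x), real_inner_self_eq_norm_sq, real_inner_self_eq_norm_sq]
    ring
  -- bounds on A and B
  have hsqle : ∀ z : H, m^2 * ‖z‖^2 ≤ ‖T z‖^2 := by
    intro z
    have h1 := hmz z
    nlinarith [mul_nonneg hmin.le (norm_nonneg z), norm_nonneg (T z)]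
  have hsqge : ∀ z : H, ‖T z‖^2 ≤ M^2 * ‖z‖^2 := by
    intro z
    have h1 := hMz z
    nlinarith [norm_nonneg (T z), mul_nonneg hM0 (norm_nonneg z)]
  have hA1 : (2+2*c)*m^2 ≤ a^2 + 2*p + b^2 := by
    have := hsqle (x + y); rw [hA, hw1] at this; linarith
  have hA2 : a^2 + 2*p + b^2 ≤ (2+2*c)*M^2 := by
    have := hsqge (x + y); rw [hA, hw1] at this; linarith
  have hB1 : (2-2*c)*m^2 ≤ a^2 - 2*p + b^2 := by
    have := hsqle (x - y); rw [hB, hw2] at this; linarith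
  have hB2 : a^2 - 2*p + b^2 ≤ (2-2*c)*M^2 := by
    have := hsqge (x - y); rw [hB, hw2] at this; linarith
  -- discriminant bound
  have hq : ∀ t : ℝ, 0 ≤ (a^2 - 2*p + b^2 - (2-2*c)*m^2) * (t*t) + (2*(a^2-b^2)) * t
      + (a^2 + 2*p + b^2 - (2+2*c)*m^2) := by
    intro t
    have e1 : ‖(x + y) + t • (x - y)‖^2 = (2 + 2*c) + t^2*(2 - 2*c) := by
      rw [norm_add_sq_real, norm_smul, real_inner_smul_right, hxyo, hw1, mul_pow,
        Real.norm_eq_abs, sq_abs, hw2]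
      ring
    have e2 : ‖T ((x + y) + t • (x - y))‖^2
        = (a^2 + 2*p + b^2) + 2*(t*(a^2-b^2)) + t^2*(a^2 - 2*p + b^2) := by
      rw [map_add, map_smul, norm_add_sq_real, real_inner_smul_right, norm_smul,
        Real.norm_eq_abs, mul_pow, sq_abs, hA, hB, hC]
    have e3 := hsqle ((x + y) + t • (x - y))
    rw [e1, e2] at e3
    nlinarith [e3, sq_nonneg t, sq_nonneg m]
  have hdisc : (a^2-b^2)^2 ≤ (a^2 + 2*p + b^2 - (2+2*c)*m^2) * (a^2 - 2*p + b^2 - (2-2*c)*m^2) := by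
    have := discrim_le_zero hq
    simp only [discrim] at this
    nlinarith [this]
  clear_value m M a b p
  -- apply the key polynomial lemma
  have kp := keypoly ((2+2*c)*M^2) ((2-2*c)*m^2) ((2+2*c)*m^2) ((2-2*c)*M^2)
      (a^2 + 2*p + b^2) (a^2 - 2*p + b^2)
      hbpos hbg hga (by ring) hA1 hA2 hB1 hB2
  -- key inequality
  have key : ((1 + c) * M^2 + (1 - c) * m^2) * p
      ≤ ((1 + c) * M^2 - (1 - c) * m^2) * (a * b) := by
    rcases le_or_gt p 0 with hp | hp
    · have h1 : ((1 + c) * M^2 + (1 - c) * m^2) * p ≤ 0 :=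
        mul_nonpos_of_nonneg_of_nonpos hN.le hp
      have h2 : 0 ≤ ((1 + c) * M^2 - (1 - c) * m^2) * (a * b) :=
        mul_nonneg hKc (by positivity)
      linarith
    · have hC2 : ((2+2*c)*M^2 - (2-2*c)*m^2)^2 * (a^2-b^2)^2
          ≤ ((2+2*c)*M^2 - (2-2*c)*m^2)^2 *
            ((a^2 + 2*p + b^2 - (2+2*c)*m^2) * (a^2 - 2*p + b^2 - (2-2*c)*m^2)) :=
        mul_le_mul_of_nonneg_left hdisc (sq_nonneg ((2+2*c)*M^2 - (2-2*c)*m^2))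
      have hid : (((1 + c) * M^2 - (1 - c) * m^2) * (a * b))^2
            - (((1 + c) * M^2 + (1 - c) * m^2) * p)^2
          = ((((2+2*c)*M^2 - (2-2*c)*m^2)^2 * ((2-2*c)*m^2 * ((a^2 + 2*p + b^2) - (2+2*c)*m^2)
                + (2+2*c)*m^2 * (a^2 - 2*p + b^2))
              - (2+2*c)*M^2 * ((2-2*c)*m^2) * ((a^2 + 2*p + b^2) - (a^2 - 2*p + b^2))^2)
            + (((2+2*c)*M^2 - (2-2*c)*m^2)^2 *
                ((a^2 + 2*p + b^2 - (2+2*c)*m^2) * (a^2 - 2*p + b^2 - (2-2*c)*m^2))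
              - ((2+2*c)*M^2 - (2-2*c)*m^2)^2 * (a^2-b^2)^2)) / 16 := by ring
      have h1 : 0 ≤ (((1 + c) * M^2 - (1 - c) * m^2) * (a * b))^2
          - (((1 + c) * M^2 + (1 - c) * m^2) * p)^2 := by
        rw [hid]
        have t1 := sub_nonneg.2 kp
        have t2 := sub_nonneg.2 hC2
        apply div_nonneg _ (by norm_num : (0:ℝ) ≤ 16)
        exact add_nonneg t1 t2
      have hsq : (((1 + c) * M^2 + (1 - c) * m^2) * p)^2
          ≤ (((1 + c) * M^2 - (1 - c) * m^2) * (a * b))^2 := by linarith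
      have hpn : 0 ≤ ((1 + c) * M^2 + (1 - c) * m^2) * p := (mul_pos hN hp).le
      have habn : 0 ≤ ((1 + c) * M^2 - (1 - c) * m^2) * (a * b) :=
        mul_nonneg hKc (by positivity)
      exact (pow_le_pow_iff_left₀ hpn habn two_ne_zero).1 hsq
  -- conclude
  have hlhs : ⟪a⁻¹ • T x, b⁻¹ • T y⟫ = p / (a * b) := by
    rw [real_inner_smul_left, real_inner_smul_right, ← hp_def]
    field_simp
  rw [hlhs]
  have h1 : p / (a * b) ≤ ((1 + c) * M^2 - (1 - c) * m^2) / ((1 + c) * M^2 + (1 - c) * m^2) := by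
    rw [div_le_div_iff₀ (by positivity) hN]
    calc p * ((1 + c) * M^2 + (1 - c) * m^2) = ((1 + c) * M^2 + (1 - c) * m^2) * p := by ring
      _ ≤ ((1 + c) * M^2 - (1 - c) * m^2) * (a * b) := key
  have h2 : ((1 + c) * M^2 - (1 - c) * m^2) / ((1 + c) * M^2 + (1 - c) * m^2) - c
      = (1 - c^2) * (M^2 - m^2) / ((1 + c) * M^2 + (1 - c) * m^2) := by
    field_simp
    ring
  linarith [h1, h2.le, h2.ge]
end

section
/- Let c ∈ (−1,1), ε ∈ [0, 1+|c|), and let T ∈ B(H,K) be a nonzero (ε,c)-angle preserving bounded linear map. Then for all x, y ∈ H: √((1+|c|)(1−|c|−ε)/((1−|c|)(1+|c|+ε)))·‖Tx‖·‖y‖ ≤ ‖Ty‖·‖x‖. -/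
/-!
Restricted to a plane spanned by orthonormal `e₁, e₂` with `⟪T e₁, T e₂⟫ = 0` (such a frame
exists in every plane, by the intermediate value theorem applied to a rotating frame), the unit
vectors `u, v = √((1 + c)/2) • e₁ ∓ √((1 - c)/2) • e₂` satisfy `⟪u, v⟫ = c` and `‖T u‖ = ‖T v‖`,
and angle preservation at this pair gives
`(1 + |c|) (1 - |c| - ε) ‖T e₁‖² ≤ (1 - |c|) (1 + |c| + ε) ‖T e₂‖²`.
Since `‖T w‖²` is a convex combination of `‖T e₁‖²` and `‖T e₂‖²` for every unit vector `w` of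
the plane, the same bound compares `‖T x‖²` and `‖T y‖²` for any unit vectors `x, y`.
-/

open scoped RealInnerProductSpace

open Real

section

variable {E : Type*} [NormedAddCommGroup E] [InnerProductSpace ℝ E]

theorem inner_smul_add_smul_of_inner_eq_zero {X Y : E} (h : ⟪X, Y⟫ = 0) (a b a' b' : ℝ) :
    ⟪a • X + b • Y, a' • X + b' • Y⟫ = a * a' * ‖X‖ ^ 2 + b * b' * ‖Y‖ ^ 2 := by
  simp only [inner_add_left, inner_add_right, real_inner_smul_left, real_inner_smul_right,
    real_inner_self_eq_norm_sq, h, real_inner_comm X Y]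
  ring

theorem norm_smul_add_smul_eq_one {X Y : E} (hX : ‖X‖ = 1) (hY : ‖Y‖ = 1) (h : ⟪X, Y⟫ = 0)
    {a b : ℝ} (hab : a ^ 2 + b ^ 2 = 1) : ‖a • X + b • Y‖ = 1 := by
  rw [← pow_eq_one_iff_of_nonneg (norm_nonneg _) two_ne_zero, ← real_inner_self_eq_norm_sq,
    inner_smul_add_smul_of_inner_eq_zero h, hX, hY]
  linear_combination hab

theorem exists_inner_rotation_eq_zero (X Z : E) :
    ∃ θ : ℝ, ⟪cos θ • X + sin θ • Z, -sin θ • X + cos θ • Z⟫ = 0 := by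
  set f : ℝ → ℝ := fun θ ↦ ⟪cos θ • X + sin θ • Z, -sin θ • X + cos θ • Z⟫
  have hf : Continuous f := by fun_prop
  have hf₀ : f 0 = ⟪X, Z⟫ := by simp [f]
  have hf₁ : f (π / 2) = -⟪X, Z⟫ := by simp [f, real_inner_comm X Z]
  have h₀ : (0 : ℝ) ∈ Set.uIcc (f 0) (f (π / 2)) := by
    rw [hf₀, hf₁, Set.mem_uIcc]
    rcases le_total 0 ⟪X, Z⟫ with h | h
    · exact Or.inr ⟨by linarith, h⟩
    · exact Or.inl ⟨h, by linarith⟩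
  obtain ⟨θ, -, hθ⟩ := intermediate_value_uIcc hf.continuousOn h₀
  exact ⟨θ, hθ⟩

end

namespace AnglePres

variable {H K : Type*} [NormedAddCommGroup H] [InnerProductSpace ℝ H]
  [NormedAddCommGroup K] [InnerProductSpace ℝ K] {c ε : ℝ} {T : H →L[ℝ] K}

theorem mul_norm_sq_le_of_inner_eq_zero (hT : AnglePres c ε T) (hc : |c| ≤ 1) (hε : 0 ≤ ε)
    {e₁ e₂ : H} (h₁ : ‖e₁‖ = 1) (h₂ : ‖e₂‖ = 1) (h₁₂ : ⟪e₁, e₂⟫ = 0)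
    (hT₁₂ : ⟪T e₁, T e₂⟫ = 0) :
    (1 + |c|) * (1 - |c| - ε) * ‖T e₁‖ ^ 2 ≤ (1 - |c|) * (1 + |c| + ε) * ‖T e₂‖ ^ 2 := by
  obtain ⟨hc₁, hc₂⟩ := abs_le.mp hc
  set p := √((1 + c) / 2)
  set q := √((1 - c) / 2)
  have hp : p ^ 2 = (1 + c) / 2 := sq_sqrt (by linarith)
  have hq : q ^ 2 = (1 - c) / 2 := sq_sqrt (by linarith)
  have hpq : p ^ 2 + q ^ 2 = 1 := by rw [hp, hq]; ring
  set u := p • e₁ + (-q) • e₂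
  set v := p • e₁ + q • e₂
  have hTu : T u = p • T e₁ + (-q) • T e₂ := by simp [u]
  have hTv : T v = p • T e₁ + q • T e₂ := by simp [v]
  have hu : ‖u‖ = 1 := norm_smul_add_smul_eq_one h₁ h₂ h₁₂ (by rw [neg_sq]; exact hpq)
  have hv : ‖v‖ = 1 := norm_smul_add_smul_eq_one h₁ h₂ h₁₂ hpq
  have huv : ⟪u, v⟫ = c * ‖u‖ * ‖v‖ := by
    rw [hu, hv, inner_smul_add_smul_of_inner_eq_zero h₁₂, h₁, h₂]
    linear_combination hp - hq
  set ρ := (1 + c) / 2 * ‖T e₁‖ ^ 2 + (1 - c) / 2 * ‖T e₂‖ ^ 2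
  have hTu_sq : ‖T u‖ ^ 2 = ρ := by
    rw [hTu, ← real_inner_self_eq_norm_sq, inner_smul_add_smul_of_inner_eq_zero hT₁₂]
    linear_combination ‖T e₁‖ ^ 2 * hp + ‖T e₂‖ ^ 2 * hq
  have hTv_sq : ‖T v‖ ^ 2 = ρ := by
    rw [hTv, ← real_inner_self_eq_norm_sq, inner_smul_add_smul_of_inner_eq_zero hT₁₂]
    linear_combination ‖T e₁‖ ^ 2 * hp + ‖T e₂‖ ^ 2 * hq
  have hTuv : ‖T u‖ * ‖T v‖ = ρ := by
    rw [(pow_left_inj₀ (norm_nonneg _) (norm_nonneg _) two_ne_zero).mp (hTu_sq.trans hTv_sq.symm),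
      ← sq, hTv_sq]
  have hinner : ⟪T u, T v⟫ = (1 + c) / 2 * ‖T e₁‖ ^ 2 - (1 - c) / 2 * ‖T e₂‖ ^ 2 := by
    rw [hTu, hTv, inner_smul_add_smul_of_inner_eq_zero hT₁₂]
    linear_combination ‖T e₁‖ ^ 2 * hp - ‖T e₂‖ ^ 2 * hq
  have key := (le_abs_self _).trans (hT u v huv)
  rw [hinner, mul_assoc, mul_assoc, hTuv] at key
  replace key : (1 - c ^ 2) * (‖T e₁‖ ^ 2 - ‖T e₂‖ ^ 2) ≤
      ε * ((1 + c) * ‖T e₁‖ ^ 2 + (1 - c) * ‖T e₂‖ ^ 2) := by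
    linear_combination 2 * key
  rw [← sq_abs c] at key
  -- passing from `c` to `|c|` costs nothing when `‖T e₂‖ ≤ ‖T e₁‖`; otherwise the claim is trivial
  rcases le_total (‖T e₂‖ ^ 2) (‖T e₁‖ ^ 2) with h | h
  · nlinarith [mul_nonneg (mul_nonneg hε (sub_nonneg.2 (le_abs_self c))) (sub_nonneg.2 h)]
  · nlinarith [mul_nonneg (sub_nonneg.2 hc) (sub_nonneg.2 h), abs_nonneg c,
      sq_nonneg ‖T e₁‖, sq_nonneg ‖T e₂‖]

theorem mul_norm_sq_smul_add_smul_le (hT : AnglePres c ε T) (hc : |c| ≤ 1) (hε : 0 ≤ ε)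
    {e₁ e₂ : H} (h₁ : ‖e₁‖ = 1) (h₂ : ‖e₂‖ = 1) (h₁₂ : ⟪e₁, e₂⟫ = 0)
    (hT₁₂ : ⟪T e₁, T e₂⟫ = 0) {a b a' b' : ℝ} (hab : a ^ 2 + b ^ 2 = 1)
    (hab' : a' ^ 2 + b' ^ 2 = 1) :
    (1 + |c|) * (1 - |c| - ε) * ‖T (a • e₁ + b • e₂)‖ ^ 2 ≤
      (1 - |c|) * (1 + |c| + ε) * ‖T (a' • e₁ + b' • e₂)‖ ^ 2 := by
  have hnorm_sq (s t : ℝ) :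
      ‖T (s • e₁ + t • e₂)‖ ^ 2 = s ^ 2 * ‖T e₁‖ ^ 2 + t ^ 2 * ‖T e₂‖ ^ 2 := by
    rw [map_add, map_smul, map_smul, ← real_inner_self_eq_norm_sq,
      inner_smul_add_smul_of_inner_eq_zero hT₁₂]
    ring
  have h₁₂' := hT.mul_norm_sq_le_of_inner_eq_zero hc hε h₁ h₂ h₁₂ hT₁₂
  have h₂₁' := hT.mul_norm_sq_le_of_inner_eq_zero hc hε h₂ h₁ (by rwa [real_inner_comm])
    (by rwa [real_inner_comm])
  have hND : (1 + |c|) * (1 - |c| - ε) ≤ (1 - |c|) * (1 + |c| + ε) := by linarith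
  have h₁₁' := mul_le_mul_of_nonneg_right hND (sq_nonneg ‖T e₁‖)
  have h₂₂' := mul_le_mul_of_nonneg_right hND (sq_nonneg ‖T e₂‖)
  rw [hnorm_sq, hnorm_sq]
  calc (1 + |c|) * (1 - |c| - ε) * (a ^ 2 * ‖T e₁‖ ^ 2 + b ^ 2 * ‖T e₂‖ ^ 2)
      = (1 + |c|) * (1 - |c| - ε) * (a ^ 2 * ‖T e₁‖ ^ 2 + b ^ 2 * ‖T e₂‖ ^ 2) *
          (a' ^ 2 + b' ^ 2) := by rw [hab', mul_one]
    _ ≤ (1 - |c|) * (1 + |c| + ε) * (a' ^ 2 * ‖T e₁‖ ^ 2 + b' ^ 2 * ‖T e₂‖ ^ 2) *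
          (a ^ 2 + b ^ 2) := by
      linarith [mul_le_mul_of_nonneg_left h₁₁' (by positivity : 0 ≤ a ^ 2 * a' ^ 2),
        mul_le_mul_of_nonneg_left h₁₂' (by positivity : 0 ≤ a ^ 2 * b' ^ 2),
        mul_le_mul_of_nonneg_left h₂₁' (by positivity : 0 ≤ b ^ 2 * a' ^ 2),
        mul_le_mul_of_nonneg_left h₂₂' (by positivity : 0 ≤ b ^ 2 * b' ^ 2)]
    _ = (1 - |c|) * (1 + |c| + ε) * (a' ^ 2 * ‖T e₁‖ ^ 2 + b' ^ 2 * ‖T e₂‖ ^ 2) := by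
      rw [hab, mul_one]

theorem mul_norm_sq_smul_add_smul_le_of_orthonormal (hT : AnglePres c ε T) (hc : |c| ≤ 1)
    (hε : 0 ≤ ε) {x z : H} (hx : ‖x‖ = 1) (hz : ‖z‖ = 1) (hxz : ⟪x, z⟫ = 0) {a b a' b' : ℝ}
    (hab : a ^ 2 + b ^ 2 = 1) (hab' : a' ^ 2 + b' ^ 2 = 1) :
    (1 + |c|) * (1 - |c| - ε) * ‖T (a • x + b • z)‖ ^ 2 ≤
      (1 - |c|) * (1 + |c| + ε) * ‖T (a' • x + b' • z)‖ ^ 2 := by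
  obtain ⟨θ, hθ⟩ := exists_inner_rotation_eq_zero (T x) (T z)
  set e₁ := cos θ • x + sin θ • z
  set e₂ := -sin θ • x + cos θ • z
  have hT₁₂ : ⟪T e₁, T e₂⟫ = 0 := by simpa [e₁, e₂] using hθ
  have h₁ : ‖e₁‖ = 1 := norm_smul_add_smul_eq_one hx hz hxz (cos_sq_add_sin_sq θ)
  have h₂ : ‖e₂‖ = 1 := norm_smul_add_smul_eq_one hx hz hxz (by rw [neg_sq, sin_sq_add_cos_sq])
  have h₁₂ : ⟪e₁, e₂⟫ = 0 := by
    rw [inner_smul_add_smul_of_inner_eq_zero hxz, hx, hz]; ring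
  have hrot (s t : ℝ) :
      s • x + t • z = (s * cos θ + t * sin θ) • e₁ + (-(s * sin θ) + t * cos θ) • e₂ := by
    simp only [e₁, e₂, smul_add, smul_smul]
    match_scalars
    · linear_combination -s * sin_sq_add_cos_sq θ
    · linear_combination -t * sin_sq_add_cos_sq θ
  have hrot_sq (s t : ℝ) :
      (s * cos θ + t * sin θ) ^ 2 + (-(s * sin θ) + t * cos θ) ^ 2 = s ^ 2 + t ^ 2 := by
    linear_combination (s ^ 2 + t ^ 2) * sin_sq_add_cos_sq θ
  rw [hrot a b, hrot a' b']
  exact hT.mul_norm_sq_smul_add_smul_le hc hε h₁ h₂ h₁₂ hT₁₂ ((hrot_sq a b).trans hab)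
    ((hrot_sq a' b').trans hab')

theorem mul_norm_sq_le_of_norm_eq_one (hT : AnglePres c ε T) (hc : |c| ≤ 1) (hε : 0 ≤ ε)
    {x y : H} (hx : ‖x‖ = 1) (hy : ‖y‖ = 1) :
    (1 + |c|) * (1 - |c| - ε) * ‖T x‖ ^ 2 ≤ (1 - |c|) * (1 + |c| + ε) * ‖T y‖ ^ 2 := by
  set s := ⟪x, y⟫
  set w := y - s • x
  by_cases hw : w = 0
  · have hyx : y = s • x := sub_eq_zero.mp hw
    have hs : |s| = 1 := by rw [← hy, hyx, norm_smul, hx, norm_eq_abs, mul_one]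
    rw [hyx, map_smul, norm_smul, norm_eq_abs, hs, one_mul]
    have hND : (1 + |c|) * (1 - |c| - ε) ≤ (1 - |c|) * (1 + |c| + ε) := by linarith
    exact mul_le_mul_of_nonneg_right hND (sq_nonneg _)
  set z := ‖w‖⁻¹ • w
  have hz : ‖z‖ = 1 := norm_smul_inv_norm hw
  have hxz : ⟪x, z⟫ = 0 := by
    rw [real_inner_smul_right, inner_sub_right, real_inner_smul_right, real_inner_self_eq_norm_sq,
      hx]
    ring
  have hyz : y = s • x + ‖w‖ • z := by
    rw [smul_smul, mul_inv_cancel₀ (norm_ne_zero_iff.mpr hw), one_smul, add_sub_cancel]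
  have hsw : s ^ 2 + ‖w‖ ^ 2 = 1 := by
    have h := inner_smul_add_smul_of_inner_eq_zero hxz s ‖w‖ s ‖w‖
    rw [← hyz, real_inner_self_eq_norm_sq, hy, hx, hz] at h
    linear_combination -h
  have hx' : x = (1 : ℝ) • x + (0 : ℝ) • z := by rw [one_smul, zero_smul, add_zero]
  rw [hx', hyz]
  exact hT.mul_norm_sq_smul_add_smul_le_of_orthonormal hc hε hx hz hxz (by norm_num) hsw

theorem mul_sq_norm_apply_mul_norm_le (hT : AnglePres c ε T) (hc : |c| ≤ 1) (hε : 0 ≤ ε)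
    (x y : H) :
    (1 + |c|) * (1 - |c| - ε) * (‖T x‖ * ‖y‖) ^ 2 ≤
      (1 - |c|) * (1 + |c| + ε) * (‖T y‖ * ‖x‖) ^ 2 := by
  rcases eq_or_ne x 0 with rfl | hx
  · simp
  rcases eq_or_ne y 0 with rfl | hy
  · simp
  have h := hT.mul_norm_sq_le_of_norm_eq_one hc hε (norm_smul_inv_norm (𝕜 := ℝ) hx)
    (norm_smul_inv_norm (𝕜 := ℝ) hy)
  simp only [map_smul, norm_smul, norm_inv, RCLike.ofReal_real_eq_id, id, norm_norm] at h
  have hx' : 0 < ‖x‖ := norm_pos_iff.mpr hx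
  have hy' : 0 < ‖y‖ := norm_pos_iff.mpr hy
  field_simp at h
  linarith

end AnglePres

theorem stmt_14_general {H K : Type*} [NormedAddCommGroup H] [InnerProductSpace ℝ H]
    [NormedAddCommGroup K] [InnerProductSpace ℝ K]
    (c : ℝ) (hc : c ∈ Set.Ioo (-1 : ℝ) 1) (ε : ℝ) (hε : ε ∈ Set.Ico 0 (1 + |c|))
    (T : H →L[ℝ] K) (hpres : AnglePres c ε T) :
    ∀ x y : H,
      Real.sqrt ((1 + |c|) * (1 - |c| - ε) / ((1 - |c|) * (1 + |c| + ε))) * ‖T x‖ * ‖y‖ ≤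
        ‖T y‖ * ‖x‖ := by
  intro x y
  have hc' : |c| < 1 := abs_lt.mpr hc
  have hD : 0 < (1 - |c|) * (1 + |c| + ε) :=
    mul_pos (by linarith) (by linarith [abs_nonneg c, hε.1])
  have key := hpres.mul_sq_norm_apply_mul_norm_le hc'.le hε.1 x y
  have key' : (1 + |c|) * (1 - |c| - ε) / ((1 - |c|) * (1 + |c| + ε)) * (‖T x‖ * ‖y‖) ^ 2 ≤
      (‖T y‖ * ‖x‖) ^ 2 := by
    rwa [div_mul_eq_mul_div, div_le_iff₀ hD, mul_comm _ ((1 - |c|) * _)]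
  calc √((1 + |c|) * (1 - |c| - ε) / ((1 - |c|) * (1 + |c| + ε))) * ‖T x‖ * ‖y‖
      = √((1 + |c|) * (1 - |c| - ε) / ((1 - |c|) * (1 + |c| + ε)) * (‖T x‖ * ‖y‖) ^ 2) := by
        rw [sqrt_mul' _ (sq_nonneg _), sqrt_sq (by positivity), mul_assoc]
    _ ≤ √((‖T y‖ * ‖x‖) ^ 2) := sqrt_le_sqrt key'
    _ = ‖T y‖ * ‖x‖ := sqrt_sq (by positivity)

theorem stmt_14 {H K : Type*} [NormedAddCommGroup H] [InnerProductSpace ℝ H] [CompleteSpace H]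
    [NormedAddCommGroup K] [InnerProductSpace ℝ K] [CompleteSpace K]
    (hH : 2 ≤ Module.rank ℝ H)
    (c : ℝ) (hc : c ∈ Set.Ioo (-1 : ℝ) 1) (ε : ℝ) (hε : ε ∈ Set.Ico 0 (1 + |c|))
    (T : H →L[ℝ] K) (hT : T ≠ 0) (hpres : AnglePres c ε T) :
    ∀ x y : H,
      Real.sqrt ((1 + |c|) * (1 - |c| - ε) / ((1 - |c|) * (1 + |c| + ε))) * ‖T x‖ * ‖y‖ ≤
        ‖T y‖ * ‖x‖ :=
  stmt_14_general c hc ε hε T hpres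
end

section
/- Let c ∈ (−1,1), ε ∈ [0, 1+|c|), and let T ∈ B(H,K) be a nonzero (ε,c)-angle preserving bounded linear map. Then T is injective and √((1+|c|)(1−|c|−ε)/((1−|c|)(1+|c|+ε)))·‖T‖·‖x‖ ≤ ‖Tx‖ ≤ ‖T‖·‖x‖ for all x ∈ H. -/
/-!
Replacing `y` by `-y` shows that `(ε, c)`- and `(ε, -c)`-angle preservation are the same
condition. If `x, y` are orthonormal and `T x ⊥ T y`, the unit vectors
`√((1-c)/2) x ± √((1+c)/2) y` meet at the angle of cosine `c`, and the condition on them compares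
`‖T x‖²` with `‖T y‖²`. With `c = |c|` and `T y = 0` this forces `ε ≥ 1 + |c|`, so `T` is
injective; with `c = -|c|` it gives `(1+|c|)(1-|c|-ε) ‖T x‖² ≤ (1-|c|)(1+|c|+ε) ‖T y‖²`.
Rotating an orthonormal basis of the plane through two given vectors until the images become
orthogonal (intermediate value theorem) produces such a pair `x, y`. On that plane
`‖T (α x + β y)‖² = α² ‖T x‖² + β² ‖T y‖²` while `‖α x + β y‖² = α² + β²`, so `‖T w‖² / ‖w‖²`
varies by at most the factor `(1-|c|)(1+|c|+ε) / ((1+|c|)(1-|c|-ε))`, which is the lower bound.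
-/

open scoped RealInnerProductSpace

section

open Real Submodule

section Geometry

variable {E : Type*} [NormedAddCommGroup E] [InnerProductSpace ℝ E]

theorem inner_smul_add_smul_of_inner_eq_zero_s15 {p q : E} (h : ⟪p, q⟫ = 0) (α β γ δ : ℝ) :
    ⟪α • p + β • q, γ • p + δ • q⟫ = α * γ * ‖p‖ ^ 2 + β * δ * ‖q‖ ^ 2 := by
  have h' : ⟪q, p⟫ = 0 := by rw [real_inner_comm, h]
  simp only [inner_add_left, inner_add_right, real_inner_smul_left, real_inner_smul_right,
    real_inner_self_eq_norm_sq, h, h']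
  ring

theorem norm_smul_add_smul_sq_of_inner_eq_zero {p q : E} (h : ⟪p, q⟫ = 0) (α β : ℝ) :
    ‖α • p + β • q‖ ^ 2 = α ^ 2 * ‖p‖ ^ 2 + β ^ 2 * ‖q‖ ^ 2 := by
  rw [← real_inner_self_eq_norm_sq, inner_smul_add_smul_of_inner_eq_zero_s15 h]
  ring

theorem norm_smul_add_smul_eq_one_s15 {p q : E} (hp : ‖p‖ = 1) (hq : ‖q‖ = 1) (h : ⟪p, q⟫ = 0)
    {α β : ℝ} (hαβ : α ^ 2 + β ^ 2 = 1) : ‖α • p + β • q‖ = 1 := by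
  rw [← pow_eq_one_iff_of_nonneg (norm_nonneg _) two_ne_zero,
    norm_smul_add_smul_sq_of_inner_eq_zero h, hp, hq]
  linear_combination hαβ

theorem exists_orthonormal_mem_span_pair {e z : E} (he : ‖e‖ = 1) (hz : z ∉ ℝ ∙ e) :
    ∃ f : E, ‖f‖ = 1 ∧ ⟪e, f⟫ = 0 ∧ z ∈ span ℝ {e, f} := by
  set g := z - ⟪e, z⟫ • e
  have hg : g ≠ 0 := fun hg =>
    hz (mem_span_singleton.mpr ⟨⟪e, z⟫, (sub_eq_zero.mp hg).symm⟩)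
  have heg : ⟪e, g⟫ = 0 := by
    simp [g, inner_sub_right, real_inner_smul_right, he]
  refine ⟨‖g‖⁻¹ • g, norm_smul_inv_norm hg, by simp [real_inner_smul_right, heg], ?_⟩
  refine mem_span_pair.mpr ⟨⟪e, z⟫, ‖g‖, ?_⟩
  rw [smul_inv_smul₀ (norm_ne_zero_iff.mpr hg), add_sub_cancel]

end Geometry

variable {H K : Type*} [NormedAddCommGroup H] [InnerProductSpace ℝ H]
  [NormedAddCommGroup K] [InnerProductSpace ℝ K]

theorem norm_mul_norm_map_eq_of_mem_span_singleton (T : H →L[ℝ] K) {e u v : H}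
    (hu : u ∈ ℝ ∙ e) (hv : v ∈ ℝ ∙ e) : ‖u‖ * ‖T v‖ = ‖v‖ * ‖T u‖ := by
  obtain ⟨a, rfl⟩ := mem_span_singleton.mp hu
  obtain ⟨b, rfl⟩ := mem_span_singleton.mp hv
  simp only [map_smul, norm_smul]
  ring

/-- The inner product of the images changes sign between `θ = 0` and `θ = π / 2`. -/
theorem exists_rotation_inner_map_eq_zero (T : H →L[ℝ] K) (e₁ e₂ : H) :
    ∃ θ : ℝ, ⟪T (cos θ • e₁ + sin θ • e₂), T (-sin θ • e₁ + cos θ • e₂)⟫ = 0 := by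
  set g : ℝ → ℝ := fun θ => ⟪T (cos θ • e₁ + sin θ • e₂), T (-sin θ • e₁ + cos θ • e₂)⟫
  have hg : Continuous g := by fun_prop
  have hg0 : g 0 = ⟪T e₁, T e₂⟫ := by simp [g]
  have hgπ : g (π / 2) = -⟪T e₁, T e₂⟫ := by simp [g, real_inner_comm]
  have h0 : (0 : ℝ) ∈ Set.uIcc (g 0) (g (π / 2)) := by
    rw [hg0, hgπ, Set.mem_uIcc]
    rcases le_total 0 ⟪T e₁, T e₂⟫ with h | h
    · exact Or.inr ⟨by linarith, h⟩
    · exact Or.inl ⟨h, by linarith⟩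
  obtain ⟨θ, -, hθ⟩ := intermediate_value_uIcc hg.continuousOn h0
  exact ⟨θ, hθ⟩

namespace AnglePres

variable {c ε : ℝ} {T : H →L[ℝ] K}

theorem neg (h : AnglePres c ε T) : AnglePres (-c) ε T := by
  intro x y hxy
  have := h x (-y) (by rw [inner_neg_right, hxy, norm_neg]; ring)
  rw [map_neg, inner_neg_right, norm_neg, ← abs_neg] at this
  convert this using 2
  ring

theorem neg_abs (h : AnglePres c ε T) : AnglePres (-|c|) ε T := by
  rcases abs_choice c with hc | hc <;> rw [hc]
  · exact h.neg
  · rwa [neg_neg]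

theorem abs (h : AnglePres c ε T) : AnglePres |c| ε T := by
  simpa using h.neg_abs.neg

theorem one_sub_sq_mul_sub_le (h : AnglePres c ε T) (hc : |c| ≤ 1) {x y : H}
    (hx : ‖x‖ = 1) (hy : ‖y‖ = 1) (hxy : ⟪x, y⟫ = 0) (hTxy : ⟪T x, T y⟫ = 0) :
    (1 - c ^ 2) * (‖T x‖ ^ 2 - ‖T y‖ ^ 2) ≤
      ε * ((1 - c) * ‖T x‖ ^ 2 + (1 + c) * ‖T y‖ ^ 2) := by
  obtain ⟨hc₁, hc₂⟩ := abs_le.mp hc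
  set p := √((1 + c) / 2)
  set q := √((1 - c) / 2)
  have hp : p ^ 2 = (1 + c) / 2 := sq_sqrt (by linarith)
  have hq : q ^ 2 = (1 - c) / 2 := sq_sqrt (by linarith)
  set u := q • x + p • y
  set v := -q • x + p • y
  have hu : ‖u‖ = 1 := norm_smul_add_smul_eq_one_s15 hx hy hxy (by linear_combination hp + hq)
  have hv : ‖v‖ = 1 := norm_smul_add_smul_eq_one_s15 hx hy hxy (by linear_combination hp + hq)
  have huv : ⟪u, v⟫ = c * ‖u‖ * ‖v‖ := by
    rw [inner_smul_add_smul_of_inner_eq_zero_s15 hxy, hu, hv, hx, hy]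
    linear_combination hp - hq
  have hTu : T u = q • T x + p • T y := by simp [u]
  have hTv : T v = -q • T x + p • T y := by simp [v]
  have hTu_sq : ‖T u‖ ^ 2 = q ^ 2 * ‖T x‖ ^ 2 + p ^ 2 * ‖T y‖ ^ 2 := by
    rw [hTu, norm_smul_add_smul_sq_of_inner_eq_zero hTxy]
  have hTv_sq : ‖T v‖ ^ 2 = q ^ 2 * ‖T x‖ ^ 2 + p ^ 2 * ‖T y‖ ^ 2 := by
    rw [hTv, norm_smul_add_smul_sq_of_inner_eq_zero hTxy, neg_sq]
  have hTuv : ‖T u‖ = ‖T v‖ :=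
    (pow_left_inj₀ (norm_nonneg _) (norm_nonneg _) two_ne_zero).mp (hTu_sq.trans hTv_sq.symm)
  have key := neg_le_of_abs_le (h u v huv)
  rw [mul_assoc _ ‖T u‖, mul_assoc c, ← hTuv, ← sq, hTu_sq, hTu, hTv,
    inner_smul_add_smul_of_inner_eq_zero_s15 hTxy] at key
  linear_combination 2 * key + 2 * ‖T x‖ ^ 2 * (ε - 1 - c) * hq + 2 * ‖T y‖ ^ 2 * (ε + 1 - c) * hp

theorem norm_sq_mul_le (h : AnglePres c ε T) (hc : |c| ≤ 1) {x y : H}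
    (hx : ‖x‖ = 1) (hy : ‖y‖ = 1) (hxy : ⟪x, y⟫ = 0) (hTxy : ⟪T x, T y⟫ = 0) :
    ‖T x‖ ^ 2 * ((1 + |c|) * (1 - |c| - ε)) ≤ ‖T y‖ ^ 2 * ((1 - |c|) * (1 + |c| + ε)) := by
  have := h.neg_abs.one_sub_sq_mul_sub_le (by rwa [abs_neg, abs_abs]) hx hy hxy hTxy
  linear_combination this

theorem mul_norm_sq_le_of_inner_map_eq_zero (h : AnglePres c ε T) (hc : |c| ≤ 1) (hε : 0 ≤ ε)
    {x y : H} (hx : ‖x‖ = 1) (hy : ‖y‖ = 1) (hxy : ⟪x, y⟫ = 0) (hTxy : ⟪T x, T y⟫ = 0)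
    {u v : H} (hu : u ∈ span ℝ {x, y}) (hv : v ∈ span ℝ {x, y}) :
    (1 + |c|) * (1 - |c| - ε) * ‖u‖ ^ 2 * ‖T v‖ ^ 2 ≤
      (1 - |c|) * (1 + |c| + ε) * ‖v‖ ^ 2 * ‖T u‖ ^ 2 := by
  obtain ⟨α₁, β₁, rfl⟩ := mem_span_pair.mp hu
  obtain ⟨α₂, β₂, rfl⟩ := mem_span_pair.mp hv
  have hTyx : ⟪T y, T x⟫ = 0 := by rw [real_inner_comm, hTxy]
  have hyx : ⟪y, x⟫ = 0 := by rw [real_inner_comm, hxy]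
  have hxy_le := h.norm_sq_mul_le hc hx hy hxy hTxy
  have hyx_le := h.norm_sq_mul_le hc hy hx hyx hTyx
  have hAB : (1 + |c|) * (1 - |c| - ε) ≤ (1 - |c|) * (1 + |c| + ε) := by
    linear_combination 2 * hε
  simp only [map_add, map_smul, norm_smul_add_smul_sq_of_inner_eq_zero hxy,
    norm_smul_add_smul_sq_of_inner_eq_zero hTxy, hx, hy]
  linear_combination (α₁ ^ 2 * α₂ ^ 2 * ‖T x‖ ^ 2) * hAB + (β₁ ^ 2 * β₂ ^ 2 * ‖T y‖ ^ 2) * hAB +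
    (α₁ ^ 2 * β₂ ^ 2) * hyx_le + (β₁ ^ 2 * α₂ ^ 2) * hxy_le

theorem mul_norm_sq_le_of_mem_span_pair (h : AnglePres c ε T) (hc : |c| ≤ 1) (hε : 0 ≤ ε)
    {e₁ e₂ : H} (he₁ : ‖e₁‖ = 1) (he₂ : ‖e₂‖ = 1) (he : ⟪e₁, e₂⟫ = 0)
    {u v : H} (hu : u ∈ span ℝ {e₁, e₂}) (hv : v ∈ span ℝ {e₁, e₂}) :
    (1 + |c|) * (1 - |c| - ε) * ‖u‖ ^ 2 * ‖T v‖ ^ 2 ≤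
      (1 - |c|) * (1 + |c| + ε) * ‖v‖ ^ 2 * ‖T u‖ ^ 2 := by
  obtain ⟨θ, hθ⟩ := exists_rotation_inner_map_eq_zero T e₁ e₂
  set x := cos θ • e₁ + sin θ • e₂
  set y := -sin θ • e₁ + cos θ • e₂
  have hx : ‖x‖ = 1 := norm_smul_add_smul_eq_one_s15 he₁ he₂ he (cos_sq_add_sin_sq θ)
  have hy : ‖y‖ = 1 := norm_smul_add_smul_eq_one_s15 he₁ he₂ he (by rw [neg_sq, sin_sq_add_cos_sq])
  have hxy : ⟪x, y⟫ = 0 := by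
    rw [inner_smul_add_smul_of_inner_eq_zero_s15 he, he₁, he₂]
    ring
  have hspan : span ℝ {e₁, e₂} ≤ span ℝ {x, y} := by
    rw [span_le, Set.insert_subset_iff, Set.singleton_subset_iff]
    refine ⟨mem_span_pair.mpr ⟨cos θ, -sin θ, ?_⟩, mem_span_pair.mpr ⟨sin θ, cos θ, ?_⟩⟩
    all_goals
      simp only [x, y, smul_add, smul_smul]
      match_scalars <;> first | ring1 | linear_combination sin_sq_add_cos_sq θ
  exact h.mul_norm_sq_le_of_inner_map_eq_zero hc hε hx hy hxy hθ (hspan hu) (hspan hv)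

theorem mul_norm_sq_le (h : AnglePres c ε T) (hc : |c| ≤ 1) (hε : 0 ≤ ε) (w₁ w₂ : H) :
    (1 + |c|) * (1 - |c| - ε) * ‖w₁‖ ^ 2 * ‖T w₂‖ ^ 2 ≤
      (1 - |c|) * (1 + |c| + ε) * ‖w₂‖ ^ 2 * ‖T w₁‖ ^ 2 := by
  rcases eq_or_ne w₁ 0 with rfl | hw₁
  · simp
  set e₁ := ‖w₁‖⁻¹ • w₁
  have he₁ : ‖e₁‖ = 1 := norm_smul_inv_norm hw₁
  have hw₁e : w₁ ∈ ℝ ∙ e₁ :=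
    mem_span_singleton.mpr ⟨‖w₁‖, smul_inv_smul₀ (norm_ne_zero_iff.mpr hw₁) w₁⟩
  by_cases hw₂e : w₂ ∈ ℝ ∙ e₁
  · have hAB : (1 + |c|) * (1 - |c| - ε) ≤ (1 - |c|) * (1 + |c| + ε) := by
      linear_combination 2 * hε
    have := norm_mul_norm_map_eq_of_mem_span_singleton T hw₁e hw₂e
    calc _ = (1 + |c|) * (1 - |c| - ε) * (‖w₁‖ * ‖T w₂‖) ^ 2 := by ring
      _ ≤ (1 - |c|) * (1 + |c| + ε) * (‖w₁‖ * ‖T w₂‖) ^ 2 := by gcongr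
      _ = _ := by rw [this]; ring
  obtain ⟨e₂, he₂, he, hw₂⟩ := exists_orthonormal_mem_span_pair he₁ hw₂e
  exact h.mul_norm_sq_le_of_mem_span_pair hc hε he₁ he₂ he
    (span_mono (by simp) hw₁e) hw₂

theorem injective (h : AnglePres c ε T) (hc : |c| < 1) (hε : ε < 1 + |c|) (hT : T ≠ 0) :
    Function.Injective T := by
  refine (injective_iff_map_eq_zero T).mpr fun x hx => by_contra fun hx₀ => ?_
  set e := ‖x‖⁻¹ • x
  have he : ‖e‖ = 1 := norm_smul_inv_norm hx₀
  have hTe : T e = 0 := by simp [e, hx]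
  obtain ⟨z, hz⟩ : ∃ z, T z ≠ 0 := by
    by_contra! hz
    exact hT (ContinuousLinearMap.ext hz)
  have hze : z ∉ ℝ ∙ e := fun hze => by
    obtain ⟨a, rfl⟩ := mem_span_singleton.mp hze
    simp [hTe] at hz
  obtain ⟨f, hf, hef, hzf⟩ := exists_orthonormal_mem_span_pair he hze
  have hTf : 0 < ‖T f‖ := by
    obtain ⟨a, b, rfl⟩ := mem_span_pair.mp hzf
    refine norm_pos_iff.mpr fun hTf => hz ?_
    simp [hTe, hTf]
  have key := h.abs.one_sub_sq_mul_sub_le (by rw [abs_abs]; exact hc.le) hf he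
    (by rw [real_inner_comm, hef]) (by simp [hTe])
  simp only [hTe, norm_zero] at key
  nlinarith [mul_pos (mul_pos (sub_pos.mpr hc) (pow_pos hTf 2)) (sub_pos.mpr hε)]

theorem sqrt_mul_opNorm_mul_norm_le (h : AnglePres c ε T) (hc : |c| < 1) (hε : 0 ≤ ε) (x : H) :
    √((1 + |c|) * (1 - |c| - ε) / ((1 - |c|) * (1 + |c| + ε))) * ‖T‖ * ‖x‖ ≤ ‖T x‖ := by
  set r := √((1 + |c|) * (1 - |c| - ε) / ((1 - |c|) * (1 + |c| + ε)))
  have hB : 0 < (1 - |c|) * (1 + |c| + ε) :=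
    mul_pos (by linarith) (by linarith [abs_nonneg c])
  have key : ∀ z, r * ‖x‖ * ‖T z‖ ≤ ‖T x‖ * ‖z‖ := by
    intro z
    rw [← pow_le_pow_iff_left₀ (by positivity) (by positivity) two_ne_zero]
    rcases le_total ((1 + |c|) * (1 - |c| - ε) / ((1 - |c|) * (1 + |c| + ε))) 0 with hA | hA
    · rw [show r = 0 from sqrt_eq_zero_of_nonpos hA, zero_mul, zero_mul, sq, zero_mul]
      positivity
    calc (r * ‖x‖ * ‖T z‖) ^ 2
        = (1 + |c|) * (1 - |c| - ε) * ‖x‖ ^ 2 * ‖T z‖ ^ 2 / ((1 - |c|) * (1 + |c| + ε)) := by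
          rw [mul_pow, mul_pow, sq_sqrt hA]
          ring
      _ ≤ (‖T x‖ * ‖z‖) ^ 2 := by
          rw [div_le_iff₀ hB]
          linear_combination h.mul_norm_sq_le hc.le hε x z
  calc r * ‖T‖ * ‖x‖ = ‖(r * ‖x‖) • T‖ := by
        rw [norm_smul, norm_mul, norm_norm, norm_of_nonneg (sqrt_nonneg _)]
        ring
    _ ≤ ‖T x‖ := ContinuousLinearMap.opNorm_le_bound _ (norm_nonneg _) fun z => by
        simpa only [FunLike.coe_smul, Pi.smul_apply, norm_smul, norm_mul, norm_norm,
          r, norm_of_nonneg (sqrt_nonneg _)] using key z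

end AnglePres

end

theorem stmt_15_general {H K : Type*} [NormedAddCommGroup H] [InnerProductSpace ℝ H]
    [NormedAddCommGroup K] [InnerProductSpace ℝ K]
    (c : ℝ) (hc : c ∈ Set.Ioo (-1 : ℝ) 1) (ε : ℝ) (hε : ε ∈ Set.Ico 0 (1 + |c|))
    (T : H →L[ℝ] K) (hT : T ≠ 0) (hpres : AnglePres c ε T) :
    Function.Injective T ∧
      ∀ x : H,
        Real.sqrt ((1 + |c|) * (1 - |c| - ε) / ((1 - |c|) * (1 + |c| + ε))) * ‖T‖ * ‖x‖ ≤ ‖T x‖ ∧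
          ‖T x‖ ≤ ‖T‖ * ‖x‖ := by
  have hc' : |c| < 1 := abs_lt.mpr hc
  exact ⟨hpres.injective hc' hε.2 hT,
    fun x => ⟨hpres.sqrt_mul_opNorm_mul_norm_le hc' hε.1 x, T.le_opNorm x⟩⟩

theorem stmt_15 {H K : Type*} [NormedAddCommGroup H] [InnerProductSpace ℝ H] [CompleteSpace H]
    [NormedAddCommGroup K] [InnerProductSpace ℝ K] [CompleteSpace K]
    (hH : 2 ≤ Module.rank ℝ H)
    (c : ℝ) (hc : c ∈ Set.Ioo (-1 : ℝ) 1) (ε : ℝ) (hε : ε ∈ Set.Ico 0 (1 + |c|))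
    (T : H →L[ℝ] K) (hT : T ≠ 0) (hpres : AnglePres c ε T) :
    Function.Injective T ∧
      ∀ x : H,
        Real.sqrt ((1 + |c|) * (1 - |c| - ε) / ((1 - |c|) * (1 + |c| + ε))) * ‖T‖ * ‖x‖ ≤ ‖T x‖ ∧
          ‖T x‖ ≤ ‖T‖ * ‖x‖ :=
  stmt_15_general c hc ε hε T hT hpres
end

section
/- Let T ∈ B(H,K) with 0 < [T] ≤ ‖T‖. Then for all x, y ∈ H with ⟨x,y⟩ = 0, we have |⟨Tx,Ty⟩| ≤ (1 − [T]²/‖T‖²)·‖Tx‖·‖Ty‖. -/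
open scoped RealInnerProductSpace

/-! For orthogonal `x`, `y` put `z = ‖T y‖ • x ± ‖T x‖ • y`. By Pythagoras and `‖T x‖ ≤ ‖T‖ ‖x‖`,
`‖z‖² ≥ 2 ‖T x‖² ‖T y‖² / ‖T‖²`, while `‖T z‖² = 2 ‖T x‖² ‖T y‖² ± 2 ‖T x‖ ‖T y‖ ⟪T x, T y⟫`.
The lower bound `‖T z‖ ≥ [T] ‖z‖` for both signs gives the estimate. -/

theorem norm_smul_add_smul_sq_real {E : Type*} [NormedAddCommGroup E] [InnerProductSpace ℝ E]
    (u v : E) (s t : ℝ) :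
    ‖s • u + t • v‖ ^ 2 = s ^ 2 * ‖u‖ ^ 2 + 2 * s * t * ⟪u, v⟫ + t ^ 2 * ‖v‖ ^ 2 := by
  rw [norm_add_sq_real, norm_smul, norm_smul, real_inner_smul_left, real_inner_smul_right,
    mul_pow, mul_pow, Real.norm_eq_abs, Real.norm_eq_abs, sq_abs, sq_abs]
  ring

theorem abs_le_one_sub_mul_of_sq_le {c p k : ℝ} (hcp : |c| ≤ p)
    (hadd : k * p ^ 2 ≤ p ^ 2 + p * c) (hsub : k * p ^ 2 ≤ p ^ 2 - p * c) :
    |c| ≤ (1 - k) * p := by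
  rcases (abs_nonneg c |>.trans hcp).eq_or_lt with rfl | hp
  · simpa using hcp
  rw [abs_le]
  constructor <;> nlinarith

namespace ContinuousLinearMap

variable {H K : Type*} [NormedAddCommGroup H] [InnerProductSpace ℝ H]
  [NormedAddCommGroup K] [InnerProductSpace ℝ K] (T : H →L[ℝ] K)

theorem minMod_nonneg : 0 ≤ minMod T :=
  Real.iInf_nonneg fun _ => norm_nonneg _

theorem minMod_mul_norm_le (z : H) : minMod T * ‖z‖ ≤ ‖T z‖ := by
  rcases eq_or_ne z 0 with rfl | hz
  · simp
  have hz' : ‖z‖ ≠ 0 := norm_ne_zero_iff.mpr hz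
  have hunit : ‖‖z‖⁻¹ • z‖ = 1 := by
    rw [norm_smul, norm_inv, norm_norm, inv_mul_cancel₀ hz']
  have hbdd : BddBelow (Set.range fun u : {u : H // ‖u‖ = 1} => ‖T u‖) :=
    ⟨0, Set.forall_mem_range.mpr fun _ => norm_nonneg _⟩
  have hle : minMod T ≤ ‖z‖⁻¹ * ‖T z‖ := by
    simpa [minMod, norm_smul] using ciInf_le hbdd ⟨_, hunit⟩
  rwa [← le_div_iff₀ (norm_pos_iff.mpr hz), div_eq_inv_mul]

theorem minMod_sq_mul_norm_sq_le (z : H) : minMod T ^ 2 * ‖z‖ ^ 2 ≤ ‖T z‖ ^ 2 := by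
  rw [← mul_pow]
  exact pow_le_pow_left₀ (mul_nonneg T.minMod_nonneg (norm_nonneg z)) (T.minMod_mul_norm_le z) 2

theorem norm_apply_div_opNorm_le (x : H) : ‖T x‖ / ‖T‖ ≤ ‖x‖ :=
  div_le_of_le_mul₀ (norm_nonneg T) (norm_nonneg x) ((T.le_opNorm x).trans_eq (mul_comm _ _))

theorem div_opNorm_sq_mul_le_of_inner_eq_zero {x y : H} (hxy : ⟪x, y⟫ = 0) (s t : ℝ) :
    (minMod T / ‖T‖) ^ 2 * (s ^ 2 * ‖T x‖ ^ 2 + t ^ 2 * ‖T y‖ ^ 2) ≤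
      s ^ 2 * ‖T x‖ ^ 2 + 2 * s * t * ⟪T x, T y⟫ + t ^ 2 * ‖T y‖ ^ 2 := by
  have hx := pow_le_pow_left₀ (div_nonneg (norm_nonneg _) (norm_nonneg _))
    (T.norm_apply_div_opNorm_le x) 2
  have hy := pow_le_pow_left₀ (div_nonneg (norm_nonneg _) (norm_nonneg _))
    (T.norm_apply_div_opNorm_le y) 2
  calc (minMod T / ‖T‖) ^ 2 * (s ^ 2 * ‖T x‖ ^ 2 + t ^ 2 * ‖T y‖ ^ 2)
      = minMod T ^ 2 * (s ^ 2 * (‖T x‖ / ‖T‖) ^ 2 + t ^ 2 * (‖T y‖ / ‖T‖) ^ 2) := by ring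
    _ ≤ minMod T ^ 2 * (s ^ 2 * ‖x‖ ^ 2 + t ^ 2 * ‖y‖ ^ 2) := by gcongr
    _ = minMod T ^ 2 * ‖s • x + t • y‖ ^ 2 := by rw [norm_smul_add_smul_sq_real, hxy]; ring
    _ ≤ ‖T (s • x + t • y)‖ ^ 2 := T.minMod_sq_mul_norm_sq_le _
    _ = _ := by rw [map_add, map_smul, map_smul, norm_smul_add_smul_sq_real]

end ContinuousLinearMap

theorem stmt_18_general {H K : Type*} [NormedAddCommGroup H] [InnerProductSpace ℝ H]
    [NormedAddCommGroup K] [InnerProductSpace ℝ K]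
    (T : H →L[ℝ] K) :
    ∀ x y : H, ⟪x, y⟫ = 0 →
      |⟪T x, T y⟫| ≤ (1 - (minMod T) ^ 2 / ‖T‖ ^ 2) * ‖T x‖ * ‖T y‖ := by
  intro x y hxy
  have hbound := T.div_opNorm_sq_mul_le_of_inner_eq_zero hxy ‖T y‖
  rw [← div_pow, mul_assoc]
  apply abs_le_one_sub_mul_of_sq_le (abs_real_inner_le_norm _ _)
  · linear_combination hbound ‖T x‖ / 2
  · linear_combination hbound (-‖T x‖) / 2

theorem stmt_18 {H K : Type*} [NormedAddCommGroup H] [InnerProductSpace ℝ H] [CompleteSpace H]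
    [NormedAddCommGroup K] [InnerProductSpace ℝ K] [CompleteSpace K]
    (hH : 2 ≤ Module.rank ℝ H)
    (T : H →L[ℝ] K) (hmin : 0 < minMod T) (hle : minMod T ≤ ‖T‖) :
    ∀ x y : H, ⟪x, y⟫ = 0 →
      |⟪T x, T y⟫| ≤ (1 - (minMod T) ^ 2 / ‖T‖ ^ 2) * ‖T x‖ * ‖T y‖ :=
  stmt_18_general T
end

section
/- Let a, b ∈ K be nonzero orthogonal vectors in a real Hilbert space with ‖a‖ ≤ ‖b‖, and let α, β, γ, δ ∈ ℝ with αβγδ ≠ 0 and αγ = −βδ. Then |⟨αa + βb, γa + δb⟩| ≤ (1 − ‖a‖²/‖b‖²)·‖αa + βb‖·‖γa + δb‖. -/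
open scoped RealInnerProductSpace

lemma aux_stmt_19 (A B α β γ δ : ℝ) (hA : 0 ≤ A) (hB : 0 ≤ B) (h : β * δ = -(α * γ)) :
    (α * γ * A + β * δ * B) ^ 2 * B ^ 2 ≤
      (B - A) ^ 2 * ((α ^ 2 * A + β ^ 2 * B) * (γ ^ 2 * A + δ ^ 2 * B)) := by
  have hsq : (β * δ) ^ 2 = (α * γ) ^ 2 := by rw [h]; ring
  have core : (α * γ) ^ 2 * B ^ 2 ≤ (α ^ 2 * A + β ^ 2 * B) * (γ ^ 2 * A + δ ^ 2 * B) := by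
    nlinarith [mul_nonneg (mul_nonneg (sq_nonneg (α * γ)) hA) hA,
      mul_nonneg (mul_nonneg (sq_nonneg (α * δ)) hA) hB,
      mul_nonneg (mul_nonneg (sq_nonneg (β * γ)) hA) hB, sq_nonneg B, hsq]
  have hfac := mul_le_mul_of_nonneg_left core (sq_nonneg (B - A))
  have heq : (α * γ * A + β * δ * B) ^ 2 * B ^ 2 = (B - A) ^ 2 * ((α * γ) ^ 2 * B ^ 2) := by
    rw [h]; ring
  rw [heq]
  linarith [hfac]

set_option maxHeartbeats 1000000 in
theorem stmt_19 {K : Type*} [NormedAddCommGroup K] [InnerProductSpace ℝ K] [CompleteSpace K]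
    (a b : K) (ha : a ≠ 0) (hb : b ≠ 0) (horth : ⟪a, b⟫ = 0) (hab : ‖a‖ ≤ ‖b‖)
    (α β γ δ : ℝ) (hne : α * β * γ * δ ≠ 0) (hrel : α * γ = -(β * δ)) :
    |⟪α • a + β • b, γ • a + δ • b⟫| ≤
      (1 - ‖a‖ ^ 2 / ‖b‖ ^ 2) * ‖α • a + β • b‖ * ‖γ • a + δ • b‖ := by
  have hA : 0 < ‖a‖ ^ 2 := pow_pos (norm_pos_iff.mpr ha) 2
  have hB : 0 < ‖b‖ ^ 2 := pow_pos (norm_pos_iff.mpr hb) 2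
  have hAB : ‖a‖ ^ 2 ≤ ‖b‖ ^ 2 := pow_le_pow_left₀ (norm_nonneg a) hab 2
  have horth' : ⟪b, a⟫ = 0 := by rwa [real_inner_comm]
  have hinner : ⟪α • a + β • b, γ • a + δ • b⟫ = α * γ * ‖a‖ ^ 2 + β * δ * ‖b‖ ^ 2 := by
    simp [inner_add_left, inner_add_right, real_inner_smul_left, real_inner_smul_right,
      horth, horth', real_inner_self_eq_norm_sq]
    ring
  have hn1 : ‖α • a + β • b‖ ^ 2 = α ^ 2 * ‖a‖ ^ 2 + β ^ 2 * ‖b‖ ^ 2 := by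
    rw [norm_add_sq_real]
    simp [real_inner_smul_left, real_inner_smul_right, horth, norm_smul, mul_pow, sq_abs]
  have hn2 : ‖γ • a + δ • b‖ ^ 2 = γ ^ 2 * ‖a‖ ^ 2 + δ ^ 2 * ‖b‖ ^ 2 := by
    rw [norm_add_sq_real]
    simp [real_inner_smul_left, real_inner_smul_right, horth, norm_smul, mul_pow, sq_abs]
  have h1 : 0 ≤ 1 - ‖a‖ ^ 2 / ‖b‖ ^ 2 := by
    have : ‖a‖ ^ 2 / ‖b‖ ^ 2 ≤ 1 := (div_le_one hB).mpr hAB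
    linarith
  have hrhs0 : 0 ≤ (1 - ‖a‖ ^ 2 / ‖b‖ ^ 2) * ‖α • a + β • b‖ * ‖γ • a + δ • b‖ := by
    positivity
  have key : (⟪α • a + β • b, γ • a + δ • b⟫ : ℝ) ^ 2 ≤
      ((1 - ‖a‖ ^ 2 / ‖b‖ ^ 2) * ‖α • a + β • b‖ * ‖γ • a + δ • b‖) ^ 2 := by
    have expand : ((1 - ‖a‖ ^ 2 / ‖b‖ ^ 2) * ‖α • a + β • b‖ * ‖γ • a + δ • b‖) ^ 2 =
        (1 - ‖a‖ ^ 2 / ‖b‖ ^ 2) ^ 2 * (‖α • a + β • b‖ ^ 2) * (‖γ • a + δ • b‖ ^ 2) := by ring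
    rw [hinner, expand, hn1, hn2]
    have hsub : 1 - ‖a‖ ^ 2 / ‖b‖ ^ 2 = (‖b‖ ^ 2 - ‖a‖ ^ 2) / ‖b‖ ^ 2 := by
      field_simp
    rw [hsub, div_pow, div_mul_eq_mul_div, div_mul_eq_mul_div,
      le_div_iff₀ (by positivity)]
    have hbd : β * δ = -(α * γ) := by linarith
    have := aux_stmt_19 (‖a‖ ^ 2) (‖b‖ ^ 2) α β γ δ hA.le hB.le hbd
    linarith [this]
  calc |⟪α • a + β • b, γ • a + δ • b⟫| = Real.sqrt (⟪α • a + β • b, γ • a + δ • b⟫ ^ 2) :=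
        (Real.sqrt_sq_eq_abs _).symm
    _ ≤ Real.sqrt (((1 - ‖a‖ ^ 2 / ‖b‖ ^ 2) * ‖α • a + β • b‖ * ‖γ • a + δ • b‖) ^ 2) :=
        Real.sqrt_le_sqrt key
    _ = (1 - ‖a‖ ^ 2 / ‖b‖ ^ 2) * ‖α • a + β • b‖ * ‖γ • a + δ • b‖ := Real.sqrt_sq hrhs0
end
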